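/- arXiv:math/0611908 — 11 statements merged into one kernel-verified Lean document; each statement's English description precedes it below -/
import Mathlib

section
/- Let n ≥ 2 be an integer and let r ∈ C²([0,∞)) satisfy r''(t)/(1 − r'(t)²) + ((n−1)/t)·r'(t) = 1 for all t ∈ (0,∞), with r(0) = 0, r'(0) = 0, 0 < r'(t) < 1 for all t ∈ (0,∞), and 0 < r''(t) ≤ 1 for all t ∈ [0,∞). Then t/√(n² + t²) ≤ r'(t) < 1 for all t ∈ [0,∞). -/
/-!
The function `t / √(n² + t²)` is a strict subsolution of the equation satisfied by `r'`: wherever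
`r'` is positive but below it at some `t > 0`, the equation forces `r''` to exceed its derivative
`n² / (n² + t²)^(3/2)`. Both vanish at `0`, so a fencing argument keeps `r'` above it.
-/

open Set

theorem image_le_of_deriv_right_lt_deriv_boundary_of_lt {f f' B B' : ℝ → ℝ} {a b : ℝ}
    (hf : ContinuousOn f (Icc a b)) (hf' : ∀ x ∈ Ico a b, HasDerivWithinAt f (f' x) (Ici x) x)
    (ha : f a ≤ B a) (hB : ContinuousOn B (Icc a b))
    (hB' : ∀ x ∈ Ico a b, HasDerivWithinAt B (B' x) (Ici x) x)
    (bound : ∀ x ∈ Ioo a b, B x < f x → f' x < B' x) : ∀ ⦃x⦄, x ∈ Icc a b → f x ≤ B x := by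
  intro x hx
  -- lowering `f` by `ε` makes it strictly smaller than `B` at `a`, where `bound` says nothing
  refine le_of_forall_sub_le fun ε hε => ?_
  refine image_le_of_deriv_right_lt_deriv_boundary' (f := fun y => f y - ε)
    (hf.sub continuousOn_const) (fun y hy => (hf' y hy).sub_const ε) (by linarith) hB hB'
    (fun y hy hfy => ?_) hx
  have hya : y ≠ a := by rintro rfl; linarith
  exact bound y ⟨lt_of_le_of_ne hy.1 hya.symm, hy.2⟩ (by linarith)

noncomputable def barrier (c t : ℝ) : ℝ := t / √(c ^ 2 + t ^ 2)

theorem hasDerivAt_barrier {c : ℝ} (hc : c ≠ 0) (t : ℝ) :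
    HasDerivAt (barrier c) (c ^ 2 / ((c ^ 2 + t ^ 2) * √(c ^ 2 + t ^ 2))) t := by
  have hq : 0 < c ^ 2 + t ^ 2 := by positivity
  have hs : 0 < √(c ^ 2 + t ^ 2) := Real.sqrt_pos.mpr hq
  have hsq := Real.sq_sqrt hq.le
  have h : HasDerivAt (barrier c) _ t :=
    (hasDerivAt_id' t).div (((hasDerivAt_pow 2 t).const_add (c ^ 2)).sqrt hq.ne') hs.ne'
  convert h using 1
  field_simp
  linear_combination -2 * t ^ 2 * hsq

theorem barrier_deriv_lt_of_lt_barrier {n t ρ σ : ℝ} (hn : 1 ≤ n) (ht : 0 < t) (hρ : 0 ≤ ρ)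
    (hρt : ρ < barrier n t) (heq : σ / (1 - ρ ^ 2) + (n - 1) / t * ρ = 1) :
    n ^ 2 / ((n ^ 2 + t ^ 2) * √(n ^ 2 + t ^ 2)) < σ := by
  set s := √(n ^ 2 + t ^ 2)
  have hq : 0 < n ^ 2 + t ^ 2 := by positivity
  have hs : 0 < s := Real.sqrt_pos.mpr hq
  have hs2 : s ^ 2 = n ^ 2 + t ^ 2 := Real.sq_sqrt hq.le
  have hns : n ≤ s := Real.le_sqrt_of_sq_le (by nlinarith)
  have hts : t ≤ s := Real.le_sqrt_of_sq_le (by nlinarith)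
  have hρs : ρ * s < t := (lt_div_iff₀ hs).mp hρt
  have hρ1 : ρ < 1 := by nlinarith
  have hA : 1 / s ≤ 1 - (n - 1) / t * ρ := by
    have h1 : (n - 1) / t * ρ ≤ (n - 1) / s :=
      calc (n - 1) / t * ρ ≤ (n - 1) / t * (t / s) :=
            mul_le_mul_of_nonneg_left hρt.le (div_nonneg (by linarith) ht.le)
        _ = (n - 1) / s := by field_simp
    have h2 : 1 / s + (n - 1) / s ≤ 1 := by rw [← add_div, div_le_one hs]; linarith
    linarith
  have hB : n ^ 2 / s ^ 2 < 1 - ρ ^ 2 := by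
    have : (ρ * s) ^ 2 < t ^ 2 := pow_lt_pow_left₀ hρs (by positivity) two_ne_zero
    rw [div_lt_iff₀ (by positivity)]
    nlinarith
  have hσ : σ = (1 - (n - 1) / t * ρ) * (1 - ρ ^ 2) := by
    have : 1 - ρ ^ 2 ≠ 0 := by nlinarith
    field_simp at heq ⊢
    linarith
  calc n ^ 2 / ((n ^ 2 + t ^ 2) * s) = 1 / s * (n ^ 2 / s ^ 2) := by rw [hs2]; field_simp
    _ < (1 - (n - 1) / t * ρ) * (1 - ρ ^ 2) :=
        mul_lt_mul' hA hB (by positivity) (by linarith [one_div_pos.mpr hs])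
    _ = σ := hσ.symm

theorem stmt_0_general (n : ℕ) (hn : 2 ≤ n) (r' r'' : ℝ → ℝ)
    (hr'' : ∀ t ∈ Set.Ici (0:ℝ), HasDerivWithinAt r' (r'' t) (Set.Ici 0) t)
    (heq : ∀ t ∈ Set.Ioi (0:ℝ),
      r'' t / (1 - (r' t) ^ 2) + ((n : ℝ) - 1) / t * r' t = 1)
    (h0' : r' 0 = 0)
    (hlt : ∀ t ∈ Set.Ioi (0:ℝ), 0 < r' t ∧ r' t < 1) :
    ∀ t ∈ Set.Ici (0:ℝ),
      t / Real.sqrt ((n : ℝ) ^ 2 + t ^ 2) ≤ r' t ∧ r' t < 1 := by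
  intro t ht
  have hn1 : (1 : ℝ) ≤ n := by exact_mod_cast (by omega : 1 ≤ n)
  have hn0 : (n : ℝ) ≠ 0 := by positivity
  refine ⟨?_, ?_⟩
  · exact image_le_of_deriv_right_lt_deriv_boundary_of_lt (a := 0) (b := t)
      (fun x _ => (hasDerivAt_barrier hn0 x).continuousAt.continuousWithinAt)
      (fun x _ => (hasDerivAt_barrier hn0 x).hasDerivWithinAt) (by simp [barrier, h0'])
      (fun x hx => (hr'' x hx.1).continuousWithinAt.mono Icc_subset_Ici_self)
      (fun x hx => (hr'' x hx.1).mono (Ici_subset_Ici.mpr hx.1))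
      (fun x hx hx' => barrier_deriv_lt_of_lt_barrier hn1 hx.1 (hlt x hx.1).1.le hx' (heq x hx.1))
      ⟨ht, le_rfl⟩
  · rcases (mem_Ici.mp ht).eq_or_lt with rfl | ht
    · simp [h0']
    · exact (hlt t ht).2

theorem stmt_0 (n : ℕ) (hn : 2 ≤ n) (r r' r'' : ℝ → ℝ)
    (hr' : ∀ t ∈ Set.Ici (0:ℝ), HasDerivWithinAt r (r' t) (Set.Ici 0) t)
    (hr'' : ∀ t ∈ Set.Ici (0:ℝ), HasDerivWithinAt r' (r'' t) (Set.Ici 0) t)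
    (hcont : ContinuousOn r'' (Set.Ici 0))
    (heq : ∀ t ∈ Set.Ioi (0:ℝ),
      r'' t / (1 - (r' t) ^ 2) + ((n : ℝ) - 1) / t * r' t = 1)
    (h0 : r 0 = 0) (h0' : r' 0 = 0)
    (hlt : ∀ t ∈ Set.Ioi (0:ℝ), 0 < r' t ∧ r' t < 1)
    (hconv : ∀ t ∈ Set.Ici (0:ℝ), 0 < r'' t ∧ r'' t ≤ 1) :
    ∀ t ∈ Set.Ici (0:ℝ),
      t / Real.sqrt ((n : ℝ) ^ 2 + t ^ 2) ≤ r' t ∧ r' t < 1 :=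
  stmt_0_general n hn r' r'' hr'' heq h0' hlt
end

section
/- Let n ≥ 2 be an integer and let r ∈ C²([0,∞)) satisfy r''(t)/(1 − r'(t)²) + ((n−1)/t)·r'(t) = 1 for all t ∈ (0,∞), with r(0) = 0, r'(0) = 0, 0 < r'(t) < 1 for all t ∈ (0,∞), and 0 < r''(t) ≤ 1 for all t ∈ [0,∞). Then r'(t) → 1 as t → +∞. -/
/-!
Since `r'' > 0` and `0 < r' < 1`, `r'` increases to a limit `L ∈ [0, 1]`. Solving the equation
for `r''` gives `r'' = (1 - (n - 1) r' / t) (1 - r'²) → 1 - L²`. A convergent function whose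
derivative converges must have derivative limit `0`, so `L² = 1`, i.e. `L = 1`.
-/

open Set Filter Topology

theorem monotoneOn_Ici_of_hasDerivAt_nonneg {f f' : ℝ → ℝ} {a : ℝ}
    (hf : ∀ t, a ≤ t → HasDerivAt f (f' t) t) (hf' : ∀ t, a ≤ t → 0 ≤ f' t) :
    MonotoneOn f (Ici a) := by
  refine monotoneOn_of_hasDerivWithinAt_nonneg (f' := f') (convex_Ici a)
    (fun t ht => (hf t ht).continuousAt.continuousWithinAt) (fun t ht => ?_) (fun t ht => ?_)
  · rw [interior_Ici] at ht
    exact (hf t (le_of_lt ht)).hasDerivWithinAt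
  · rw [interior_Ici] at ht
    exact hf' t (le_of_lt ht)

theorem MonotoneOn.exists_tendsto_atTop_of_le {f : ℝ → ℝ} {a M : ℝ} (hf : MonotoneOn f (Ici a))
    (hM : ∀ t, a ≤ t → f t ≤ M) : ∃ L, Tendsto f atTop (𝓝 L) := by
  set g : ℝ → ℝ := fun t => f (max t a)
  have hg : Monotone g := fun s t hst =>
    hf (le_max_right s a) (le_max_right t a) (max_le_max hst le_rfl)
  have hgM : BddAbove (range g) := ⟨M, by rintro _ ⟨t, rfl⟩; exact hM _ (le_max_right t a)⟩
  refine ⟨_, (tendsto_atTop_ciSup hg hgM).congr' ?_⟩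
  filter_upwards [eventually_ge_atTop a] with t ht
  simp only [g, max_eq_left ht]

theorem tendsto_atTop_of_hasDerivAt_of_tendsto_pos {f f' : ℝ → ℝ} {l : ℝ}
    (hf : ∀ᶠ t in atTop, HasDerivAt f (f' t) t) (hl : Tendsto f' atTop (𝓝 l)) (hl0 : 0 < l) :
    Tendsto f atTop atTop := by
  obtain ⟨a, ha⟩ := eventually_atTop.1 (hf.and (hl.eventually (lt_mem_nhds (half_lt_self hl0))))
  have hmono : MonotoneOn (fun t => f t - l / 2 * t) (Ici a) :=
    monotoneOn_Ici_of_hasDerivAt_nonneg (f' := fun t => f' t - l / 2)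
      (fun t ht => ((ha t ht).1.sub ((hasDerivAt_id t).const_mul (l / 2))).congr_deriv (by simp))
      (fun t ht => sub_nonneg.2 (ha t ht).2.le)
  have hlin : Tendsto (fun t => f a - l / 2 * a + l / 2 * t) atTop atTop :=
    tendsto_atTop_add_const_left _ _ (tendsto_id.const_mul_atTop (half_pos hl0))
  refine tendsto_atTop_mono' _ ?_ hlin
  filter_upwards [eventually_ge_atTop a] with t ht
  have hstep : f a - l / 2 * a ≤ f t - l / 2 * t := hmono self_mem_Ici ht ht
  linarith

theorem eq_zero_of_tendsto_of_hasDerivAt_tendsto {f f' : ℝ → ℝ} {L l : ℝ}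
    (hf : ∀ᶠ t in atTop, HasDerivAt f (f' t) t) (hfL : Tendsto f atTop (𝓝 L))
    (hl : Tendsto f' atTop (𝓝 l)) : l = 0 := by
  rcases lt_trichotomy l 0 with hneg | hzero | hpos
  · have := tendsto_atTop_of_hasDerivAt_of_tendsto_pos (hf.mono fun t ht => ht.neg) hl.neg
      (neg_pos.2 hneg)
    exact absurd this (not_tendsto_atTop_of_tendsto_nhds hfL.neg)
  · exact hzero
  · exact absurd (tendsto_atTop_of_hasDerivAt_of_tendsto_pos hf hl hpos)
      (not_tendsto_atTop_of_tendsto_nhds hfL)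

theorem stmt_1_general (n : ℕ) (r' r'' : ℝ → ℝ)
    (hr'' : ∀ t ∈ Set.Ici (0:ℝ), HasDerivWithinAt r' (r'' t) (Set.Ici 0) t)
    (heq : ∀ t ∈ Set.Ioi (0:ℝ),
      r'' t / (1 - (r' t) ^ 2) + ((n : ℝ) - 1) / t * r' t = 1)
    (hlt : ∀ t ∈ Set.Ioi (0:ℝ), 0 < r' t ∧ r' t < 1)
    (hconv : ∀ t ∈ Set.Ici (0:ℝ), 0 < r'' t ∧ r'' t ≤ 1) :
    Filter.Tendsto r' Filter.atTop (nhds 1) := by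
  have hderiv : ∀ t, 1 ≤ t → HasDerivAt r' (r'' t) t := fun t ht =>
    (hr'' t (zero_le_one.trans ht)).hasDerivAt (Ici_mem_nhds (zero_lt_one.trans_le ht))
  obtain ⟨L, hL⟩ :=
    (monotoneOn_Ici_of_hasDerivAt_nonneg hderiv fun t ht => (hconv t (zero_le_one.trans ht)).1.le)
      |>.exists_tendsto_atTop_of_le fun t ht => (hlt t (zero_lt_one.trans_le ht)).2.le
  have hL0 : 0 ≤ L := ge_of_tendsto hL <| by
    filter_upwards [eventually_gt_atTop 0] with t ht using (hlt t ht).1.le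
  have hode : ∀ᶠ t in atTop, (1 - ((n : ℝ) - 1) / t * r' t) * (1 - r' t ^ 2) = r'' t := by
    filter_upwards [eventually_gt_atTop 0] with t ht
    obtain ⟨hpos, hlt1⟩ := hlt t ht
    have hden : 1 - r' t ^ 2 ≠ 0 := by nlinarith
    exact ((div_eq_iff hden).1 (eq_sub_of_add_eq (heq t ht))).symm
  have hr''L : Tendsto r'' atTop (𝓝 ((1 - 0 * L) * (1 - L ^ 2))) :=
    (((tendsto_const_nhds.div_atTop tendsto_id).mul hL).const_sub 1).mul
      ((hL.pow 2).const_sub 1) |>.congr' hode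
  have hlim_zero := eq_zero_of_tendsto_of_hasDerivAt_tendsto
    (eventually_ge_atTop 1 |>.mono hderiv) hL hr''L
  obtain rfl : L = 1 := by nlinarith
  exact hL

theorem stmt_1 (n : ℕ) (hn : 2 ≤ n) (r r' r'' : ℝ → ℝ)
    (hr' : ∀ t ∈ Set.Ici (0:ℝ), HasDerivWithinAt r (r' t) (Set.Ici 0) t)
    (hr'' : ∀ t ∈ Set.Ici (0:ℝ), HasDerivWithinAt r' (r'' t) (Set.Ici 0) t)
    (hcont : ContinuousOn r'' (Set.Ici 0))
    (heq : ∀ t ∈ Set.Ioi (0:ℝ),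
      r'' t / (1 - (r' t) ^ 2) + ((n : ℝ) - 1) / t * r' t = 1)
    (h0 : r 0 = 0) (h0' : r' 0 = 0)
    (hlt : ∀ t ∈ Set.Ioi (0:ℝ), 0 < r' t ∧ r' t < 1)
    (hconv : ∀ t ∈ Set.Ici (0:ℝ), 0 < r'' t ∧ r'' t ≤ 1) :
    Filter.Tendsto r' Filter.atTop (nhds 1) :=
  stmt_1_general n r' r'' hr'' heq hlt hconv
end

section
/- Let n ≥ 2 be an integer and suppose r₁, r₂ ∈ C²([0,∞)) both satisfy r''(t)/(1 − r'(t)²) + ((n−1)/t)·r'(t) = 1 for all t ∈ (0,∞), with r(0) = 0, r'(0) = 0, and 0 < r'(t) < 1 for all t ∈ (0,∞). Then r₁(t) = r₂(t) for all t ≥ 0. -/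
/-!
Subtracting the equations solved for `r''`, the difference `w = r₁' - r₂'` satisfies
`w' = A w`, where `A` is unbounded below near `t = 0` (like `-(n - 1)/t`) but bounded above on
all of `(0, ∞)`: near `0` both slopes are below `1/2`, which makes `A ≤ 0`, and away from `0`
the factor `(n - 1)/t` is bounded. A one-sided Grönwall estimate for `w²`, with `w(0) = 0`,
gives `w ≡ 0`, so `r₁' = r₂'` and hence `r₁ = r₂`.
-/

open Set Filter Topology

theorem eqOn_zero_of_mul_deriv_le_mul_sq {w w' : ℝ → ℝ} {a K : ℝ}
    (hw : ∀ x ∈ Ici a, HasDerivWithinAt w (w' x) (Ici a) x) (ha : w a = 0)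
    (hK : ∀ x ∈ Ioi a, w x * w' x ≤ K * w x ^ 2) : EqOn w 0 (Ici a) := by
  intro b hb
  have hcont : ContinuousOn (fun x => w x ^ 2) (Icc a b) := fun x hx =>
    ((hw x hx.1).continuousWithinAt.mono Icc_subset_Ici_self).pow 2
  have hderiv : ∀ x ∈ Ico a b,
      HasDerivWithinAt (fun x => w x ^ 2) (2 * w x * w' x) (Ici x) x := fun x hx => by
    simpa using ((hw x hx.1).mono (Ici_subset_Ici.2 hx.1)).fun_pow 2
  have hbound : ∀ x ∈ Ico a b, 2 * w x * w' x ≤ 2 * K * w x ^ 2 + 0 := by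
    intro x hx
    rcases hx.1.eq_or_lt with rfl | hx'
    · simp [ha]
    · linarith [hK x hx']
  have hsq : w b ^ 2 ≤ 0 := by
    simpa [gronwallBound_ε0_δ0] using le_gronwallBound_of_liminf_deriv_right_le (δ := 0) hcont
      (fun x hx _ hr => (hderiv x hx).liminf_right_slope_le hr) (by simp [ha]) hbound b
      (right_mem_Icc.2 hb)
  exact pow_eq_zero_iff two_ne_zero |>.1 (le_antisymm hsq (sq_nonneg _))

namespace RadialODE

/-- `r'' = radialRHS c t r'` is the equation `r''/(1 - r'²) + (c/t) r' = 1` solved for `r''`. -/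
noncomputable def radialRHS (c t v : ℝ) : ℝ := (1 - v ^ 2) * (1 - c / t * v)

theorem eq_radialRHS {c t v v' : ℝ} (hv : 1 - v ^ 2 ≠ 0)
    (h : v' / (1 - v ^ 2) + c / t * v = 1) : v' = radialRHS c t v := by
  rw [radialRHS, mul_comm, ← div_eq_iff hv]
  linarith

theorem radialRHS_sub (c t a b : ℝ) :
    radialRHS c t a - radialRHS c t b
      = (a - b) * (-(a + b) - c / t * (1 - (a ^ 2 + a * b + b ^ 2))) := by
  unfold radialRHS
  ring

theorem mul_radialRHS_sub_nonpos {c t a b : ℝ} (hct : 0 ≤ c / t) (ha : 0 ≤ a) (hb : 0 ≤ b)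
    (hab : a ^ 2 + a * b + b ^ 2 ≤ 1) : (a - b) * (radialRHS c t a - radialRHS c t b) ≤ 0 := by
  rw [radialRHS_sub, ← mul_assoc, ← sq]
  exact mul_nonpos_of_nonneg_of_nonpos (sq_nonneg _)
    (by nlinarith [mul_nonneg hct (sub_nonneg.2 hab)])

theorem mul_radialRHS_sub_le {c t a b ε : ℝ} (hc : 0 ≤ c) (hε : 0 < ε) (ht : ε ≤ t)
    (ha : 0 ≤ a) (hb : 0 ≤ b) (ha₁ : a ≤ 1) (hb₁ : b ≤ 1) :
    (a - b) * (radialRHS c t a - radialRHS c t b) ≤ 2 * c / ε * (a - b) ^ 2 := by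
  have hct : c / t ≤ c / ε := div_le_div_of_nonneg_left hc hε ht
  have hct₀ : 0 ≤ c / t := div_nonneg hc (hε.le.trans ht)
  have hS : a ^ 2 + a * b + b ^ 2 - 1 ≤ 2 := by nlinarith
  rw [radialRHS_sub, ← mul_assoc, ← sq, mul_comm, mul_div_assoc]
  refine mul_le_mul_of_nonneg_right ?_ (sq_nonneg _)
  nlinarith [mul_le_mul_of_nonneg_left hS hct₀]

/-- `c` plays the role of `n - 1`. -/
structure IsSolution (c : ℝ) (r r' r'' : ℝ → ℝ) : Prop where
  hasDerivWithinAt : ∀ t ∈ Ici (0:ℝ), HasDerivWithinAt r (r' t) (Ici 0) t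
  hasDerivWithinAt_deriv : ∀ t ∈ Ici (0:ℝ), HasDerivWithinAt r' (r'' t) (Ici 0) t
  eq : ∀ t ∈ Ioi (0:ℝ), r'' t / (1 - r' t ^ 2) + c / t * r' t = 1
  zero : r 0 = 0
  deriv_zero : r' 0 = 0
  deriv_mem : ∀ t ∈ Ioi (0:ℝ), 0 < r' t ∧ r' t < 1

variable {c : ℝ} {r r' r'' : ℝ → ℝ}

theorem IsSolution.second_deriv_eq (h : IsSolution c r r' r'') {t : ℝ} (ht : 0 < t) :
    r'' t = radialRHS c t (r' t) := by
  obtain ⟨h₀, h₁⟩ := h.deriv_mem t ht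
  exact eq_radialRHS (by nlinarith) (h.eq t ht)

theorem IsSolution.eventually_deriv_lt (h : IsSolution c r r' r'') {δ : ℝ} (hδ : 0 < δ) :
    ∀ᶠ t in 𝓝[>] 0, r' t < δ := by
  have hlim := (h.hasDerivWithinAt_deriv 0 self_mem_Ici).continuousWithinAt
  rw [ContinuousWithinAt, h.deriv_zero] at hlim
  exact (hlim.mono_left (nhdsWithin_mono _ Ioi_subset_Ici_self)).eventually_lt_const hδ

theorem IsSolution.eqOn_deriv {r₁ r₁' r₁'' r₂ r₂' r₂'' : ℝ → ℝ} (hc : 0 ≤ c)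
    (h₁ : IsSolution c r₁ r₁' r₁'') (h₂ : IsSolution c r₂ r₂' r₂'') :
    EqOn r₁' r₂' (Ici 0) := by
  obtain ⟨ε, hε, hsmall⟩ := mem_nhdsGT_iff_exists_Ioo_subset.1
    ((h₁.eventually_deriv_lt one_half_pos).and (h₂.eventually_deriv_lt one_half_pos))
  have hK : ∀ t ∈ Ioi (0:ℝ),
      (r₁' - r₂') t * (r₁'' - r₂'') t ≤ 2 * c / ε * (r₁' - r₂') t ^ 2 := by
    intro t ht
    obtain ⟨ha₀, ha₁⟩ := h₁.deriv_mem t ht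
    obtain ⟨hb₀, hb₁⟩ := h₂.deriv_mem t ht
    simp only [Pi.sub_apply, h₁.second_deriv_eq ht, h₂.second_deriv_eq ht]
    rcases lt_or_ge t ε with htε | htε
    · obtain ⟨ha, hb⟩ := hsmall ⟨ht, htε⟩
      exact (mul_radialRHS_sub_nonpos (div_nonneg hc (le_of_lt ht)) ha₀.le hb₀.le
        (by nlinarith)).trans
        (mul_nonneg (div_nonneg (by linarith) hε.le) (sq_nonneg _))
    · exact mul_radialRHS_sub_le hc hε htε ha₀.le hb₀.le ha₁.le hb₁.le
  intro t ht
  exact sub_eq_zero.1 <| eqOn_zero_of_mul_deriv_le_mul_sq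
    (fun x hx => (h₁.hasDerivWithinAt_deriv x hx).sub (h₂.hasDerivWithinAt_deriv x hx))
    (by simp [h₁.deriv_zero, h₂.deriv_zero]) hK ht

theorem IsSolution.eqOn {r₁ r₁' r₁'' r₂ r₂' r₂'' : ℝ → ℝ} (hc : 0 ≤ c)
    (h₁ : IsSolution c r₁ r₁' r₁'') (h₂ : IsSolution c r₂ r₂' r₂'') : EqOn r₁ r₂ (Ici 0) := by
  have hderiv := h₁.eqOn_deriv hc h₂
  intro t ht
  refine sub_eq_zero.1 <| eqOn_zero_of_mul_deriv_le_mul_sq (K := 0)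
    (fun x hx => (h₁.hasDerivWithinAt x hx).sub (h₂.hasDerivWithinAt x hx))
    (by simp [h₁.zero, h₂.zero]) (fun x hx => ?_) ht
  simp [hderiv (mem_Ici.2 (le_of_lt hx))]

end RadialODE

open RadialODE in
theorem stmt_3_general (n : ℕ) (hn : 2 ≤ n) (r₁ r₁' r₁'' r₂ r₂' r₂'' : ℝ → ℝ)
    (hr₁' : ∀ t ∈ Set.Ici (0:ℝ), HasDerivWithinAt r₁ (r₁' t) (Set.Ici 0) t)
    (hr₁'' : ∀ t ∈ Set.Ici (0:ℝ), HasDerivWithinAt r₁' (r₁'' t) (Set.Ici 0) t)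
    (heq₁ : ∀ t ∈ Set.Ioi (0:ℝ),
      r₁'' t / (1 - (r₁' t) ^ 2) + ((n : ℝ) - 1) / t * r₁' t = 1)
    (h0₁ : r₁ 0 = 0) (h0₁' : r₁' 0 = 0)
    (hlt₁ : ∀ t ∈ Set.Ioi (0:ℝ), 0 < r₁' t ∧ r₁' t < 1)
    (hr₂' : ∀ t ∈ Set.Ici (0:ℝ), HasDerivWithinAt r₂ (r₂' t) (Set.Ici 0) t)
    (hr₂'' : ∀ t ∈ Set.Ici (0:ℝ), HasDerivWithinAt r₂' (r₂'' t) (Set.Ici 0) t)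
    (heq₂ : ∀ t ∈ Set.Ioi (0:ℝ),
      r₂'' t / (1 - (r₂' t) ^ 2) + ((n : ℝ) - 1) / t * r₂' t = 1)
    (h0₂ : r₂ 0 = 0) (h0₂' : r₂' 0 = 0)
    (hlt₂ : ∀ t ∈ Set.Ioi (0:ℝ), 0 < r₂' t ∧ r₂' t < 1) :
    ∀ t ∈ Set.Ici (0:ℝ), r₁ t = r₂ t := by
  have hc : (0:ℝ) ≤ n - 1 := by
    have : (2:ℝ) ≤ n := by exact_mod_cast hn
    linarith
  exact IsSolution.eqOn hc ⟨hr₁', hr₁'', heq₁, h0₁, h0₁', hlt₁⟩ ⟨hr₂', hr₂'', heq₂, h0₂, h0₂', hlt₂⟩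

theorem stmt_3 (n : ℕ) (hn : 2 ≤ n) (r₁ r₁' r₁'' r₂ r₂' r₂'' : ℝ → ℝ)
    (hr₁' : ∀ t ∈ Set.Ici (0:ℝ), HasDerivWithinAt r₁ (r₁' t) (Set.Ici 0) t)
    (hr₁'' : ∀ t ∈ Set.Ici (0:ℝ), HasDerivWithinAt r₁' (r₁'' t) (Set.Ici 0) t)
    (hcont₁ : ContinuousOn r₁'' (Set.Ici 0))
    (heq₁ : ∀ t ∈ Set.Ioi (0:ℝ),
      r₁'' t / (1 - (r₁' t) ^ 2) + ((n : ℝ) - 1) / t * r₁' t = 1)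
    (h0₁ : r₁ 0 = 0) (h0₁' : r₁' 0 = 0)
    (hlt₁ : ∀ t ∈ Set.Ioi (0:ℝ), 0 < r₁' t ∧ r₁' t < 1)
    (hr₂' : ∀ t ∈ Set.Ici (0:ℝ), HasDerivWithinAt r₂ (r₂' t) (Set.Ici 0) t)
    (hr₂'' : ∀ t ∈ Set.Ici (0:ℝ), HasDerivWithinAt r₂' (r₂'' t) (Set.Ici 0) t)
    (hcont₂ : ContinuousOn r₂'' (Set.Ici 0))
    (heq₂ : ∀ t ∈ Set.Ioi (0:ℝ),
      r₂'' t / (1 - (r₂' t) ^ 2) + ((n : ℝ) - 1) / t * r₂' t = 1)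
    (h0₂ : r₂ 0 = 0) (h0₂' : r₂' 0 = 0)
    (hlt₂ : ∀ t ∈ Set.Ioi (0:ℝ), 0 < r₂' t ∧ r₂' t < 1) :
    ∀ t ∈ Set.Ici (0:ℝ), r₁ t = r₂ t :=
  stmt_3_general n hn r₁ r₁' r₁'' r₂ r₂' r₂'' hr₁' hr₁'' heq₁ h0₁ h0₁' hlt₁ hr₂' hr₂'' heq₂ h0₂ h0₂'
    hlt₂
end

section
/- Let n ≥ 2 be an integer and let r ∈ C²([0,∞)) satisfy r''(t)/(1 − r'(t)²) + ((n−1)/t)·r'(t) = 1 for all t ∈ (0,∞), with r(0) = 0, r'(0) = 0, 0 < r'(t) < 1 for all t ∈ (0,∞), and 0 < r''(t) ≤ 1 for all t ∈ [0,∞). Then √(n² + t²) − n ≤ r(t) ≤ t for all t ∈ [0,∞). -/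
/-!
Put `φ = artanh ∘ r'`, so that `φ' = r'' / (1 - r'²)` and the equation reads
`φ' + (n - 1) r' / t = 1`. Since `x ≤ artanh x` on `[0, 1)`, this gives
`(t^(n-1) φ)' ≥ t^(n-1)`, hence `artanh (r' t) ≥ t / n`. As `artanh (s / √(1 + s²)) = arsinh s ≤ s`,
it follows that `r' t ≥ t / √(n² + t²)`, the derivative of `√(n² + t²) - n`; integrating this and
`r' < 1` from `0` gives the two bounds.
-/

open Set Real

theorem le_of_hasDerivAt_le {f g f' g' : ℝ → ℝ} {a : ℝ}
    (hf : ContinuousOn f (Ici a)) (hg : ContinuousOn g (Ici a))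
    (hf' : ∀ t ∈ Ioi a, HasDerivAt f (f' t) t) (hg' : ∀ t ∈ Ioi a, HasDerivAt g (g' t) t)
    (ha : f a ≤ g a) (h : ∀ t ∈ Ioi a, f' t ≤ g' t) : ∀ t ∈ Ici a, f t ≤ g t := by
  have hmono : MonotoneOn (g - f) (Ici a) := by
    refine monotoneOn_of_hasDerivWithinAt_nonneg (convex_Ici a) (hg.sub hf) (f' := g' - f') ?_ ?_
    · rw [interior_Ici]
      exact fun t ht => ((hg' t ht).sub (hf' t ht)).hasDerivWithinAt
    · rw [interior_Ici]
      exact fun t ht => sub_nonneg.2 (h t ht)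
  intro t ht
  have := hmono self_mem_Ici ht ht
  simp only [Pi.sub_apply] at this
  linarith

theorem div_add_one_le_of_one_le_deriv_add_div_mul {φ φ' : ℝ → ℝ} (k : ℕ)
    (hφ : ContinuousOn φ (Ici 0)) (hφ' : ∀ t ∈ Ioi 0, HasDerivAt φ (φ' t) t)
    (h0 : 0 ≤ φ 0)
    (h : ∀ t ∈ Ioi 0, 1 ≤ φ' t + k / t * φ t) : ∀ t ∈ Ici 0, t / (k + 1) ≤ φ t := by
  have hweighted : ∀ t ∈ Ici (0 : ℝ), t ^ (k + 1) / (k + 1) ≤ t ^ k * φ t := by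
    refine le_of_hasDerivAt_le (by fun_prop) ((continuous_pow k).continuousOn.mul hφ)
      (f' := fun t => t ^ k) (g' := fun t => k * t ^ (k - 1) * φ t + t ^ k * φ' t)
      (fun t _ => ?_) (fun t ht => (hasDerivAt_pow k t).mul (hφ' t ht)) ?_
      (fun t (ht : 0 < t) => ?_)
    · refine ((hasDerivAt_pow (k + 1) t).div_const ((k : ℝ) + 1)).congr_deriv ?_
      have : (k : ℝ) + 1 ≠ 0 := k.cast_add_one_ne_zero
      push_cast
      field_simp
    · simpa using mul_nonneg (pow_nonneg le_rfl k) h0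
    · have hpow : (k : ℝ) * t ^ (k - 1) = t ^ k * (k / t) := by
        rcases k with _ | k
        · simp
        · rw [Nat.add_sub_cancel, pow_succ]
          field_simp
      calc t ^ k = t ^ k * 1 := (mul_one _).symm
        _ ≤ t ^ k * (φ' t + k / t * φ t) := by gcongr; exact h t ht
        _ = k * t ^ (k - 1) * φ t + t ^ k * φ' t := by rw [hpow]; ring
  intro t ht
  rcases (mem_Ici.1 ht).eq_or_lt with rfl | ht₀
  · simpa using h0
  · have := hweighted t ht
    rw [pow_succ, mul_div_assoc] at this
    exact le_of_mul_le_mul_left this (pow_pos ht₀ k)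

namespace Real

theorem hasDerivAt_artanh {x : ℝ} (hx : x ∈ Ioo (-1) 1) :
    HasDerivAt artanh (1 - x ^ 2)⁻¹ x := by
  obtain ⟨hx₁, hx₂⟩ := hx
  have h₁ := ((hasDerivAt_id x).const_add 1).log (by simp; linarith)
  have h₂ := ((hasDerivAt_id x).const_sub 1).log (by simp; linarith)
  have hlog : HasDerivAt (fun y => 1 / 2 * (log (1 + y) - log (1 - y)))
      (1 / 2 * (1 / (1 + x) - -1 / (1 - x))) x := (h₁.sub h₂).const_mul (1 / 2)
  have heq : (fun y => 1 / 2 * (log (1 + y) - log (1 - y))) =ᶠ[nhds x] artanh := by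
    filter_upwards [Ioo_mem_nhds hx₁ hx₂] with y ⟨hy₁, hy₂⟩
    rw [artanh_eq_half_log ⟨hy₁.le, hy₂.le⟩, log_div (by linarith) (by linarith)]
  refine (hlog.congr_of_eventuallyEq heq.symm).congr_deriv ?_
  have hplus : 1 + x ≠ 0 := by linarith
  have hminus : 1 - x ≠ 0 := by linarith
  rw [show 1 - x ^ 2 = (1 + x) * (1 - x) by ring]
  field_simp
  ring

theorem self_le_artanh {x : ℝ} (hx : x ∈ Ico 0 1) : x ≤ artanh x := by
  have hderiv : ∀ y ∈ Ico (0 : ℝ) 1,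
      HasDerivAt (fun y => artanh y - y) ((1 - y ^ 2)⁻¹ - 1) y :=
    fun y hy => (hasDerivAt_artanh ⟨by linarith [hy.1], hy.2⟩).sub (hasDerivAt_id y)
  have hmono : MonotoneOn (fun y => artanh y - y) (Ico 0 1) := by
    refine monotoneOn_of_hasDerivWithinAt_nonneg (convex_Ico 0 1)
      (f' := fun y => (1 - y ^ 2)⁻¹ - 1)
      (fun y hy => (hderiv y hy).continuousAt.continuousWithinAt)
      (fun y hy => (hderiv y (interior_subset hy)).hasDerivWithinAt) (fun y hy => ?_)
    rw [interior_Ico] at hy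
    obtain ⟨hy₁, hy₂⟩ := hy
    rw [sub_nonneg]
    exact (one_le_inv₀ (by nlinarith)).2 (by nlinarith)
  have := hmono ⟨le_rfl, zero_lt_one⟩ hx hx.1
  simp only [artanh_zero, sub_zero] at this
  linarith

theorem arsinh_le_self {x : ℝ} (hx : 0 ≤ x) : arsinh x ≤ x := by
  simpa using arsinh_le_arsinh.2 (self_le_sinh_iff.2 hx)

theorem div_sqrt_sq_add_sq_le_of_div_le_artanh {a t y : ℝ} (ha : 0 < a) (ht : 0 ≤ t)
    (hy : y ∈ Ioo (-1) 1) (h : t / a ≤ artanh y) : t / √(a ^ 2 + t ^ 2) ≤ y := by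
  have hsqrt : √(a ^ 2 + t ^ 2) = a * √(1 + (t / a) ^ 2) := by
    rw [← sqrt_sq ha.le, ← sqrt_mul (sq_nonneg a), sqrt_sq ha.le]
    congr 1
    field_simp
  have htanh : t / √(a ^ 2 + t ^ 2) = tanh (arsinh (t / a)) := by
    rw [tanh_arsinh, hsqrt, mul_comm, div_mul_eq_div_div, div_right_comm]
  rw [htanh, ← artanh_le_artanh_iff ⟨neg_one_lt_tanh _, tanh_lt_one _⟩ hy, artanh_tanh]
  exact (arsinh_le_self (div_nonneg ht ha.le)).trans h

theorem hasDerivAt_sqrt_sq_add_sq {a : ℝ} (ha : a ≠ 0) (t : ℝ) :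
    HasDerivAt (fun t => √(a ^ 2 + t ^ 2)) (t / √(a ^ 2 + t ^ 2)) t := by
  have hpos : 0 < a ^ 2 + t ^ 2 := by positivity
  refine (((hasDerivAt_pow 2 t).const_add (a ^ 2)).sqrt hpos.ne').congr_deriv ?_
  have := (sqrt_pos.2 hpos).ne'
  field_simp
  ring

end Real

theorem stmt_4_general (n : ℕ) (hn : 2 ≤ n) (r r' r'' : ℝ → ℝ)
    (hr' : ∀ t ∈ Set.Ici (0:ℝ), HasDerivWithinAt r (r' t) (Set.Ici 0) t)
    (hr'' : ∀ t ∈ Set.Ici (0:ℝ), HasDerivWithinAt r' (r'' t) (Set.Ici 0) t)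
    (heq : ∀ t ∈ Set.Ioi (0:ℝ),
      r'' t / (1 - (r' t) ^ 2) + ((n : ℝ) - 1) / t * r' t = 1)
    (h0 : r 0 = 0) (h0' : r' 0 = 0)
    (hlt : ∀ t ∈ Set.Ioi (0:ℝ), 0 < r' t ∧ r' t < 1) :
    ∀ t ∈ Set.Ici (0:ℝ),
      Real.sqrt ((n : ℝ) ^ 2 + t ^ 2) - n ≤ r t ∧ r t ≤ t := by
  obtain ⟨k, rfl⟩ : ∃ k, n = k + 1 := ⟨n - 1, by omega⟩
  push_cast at heq ⊢
  simp only [add_sub_cancel_right] at heq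
  have hr'_mem : ∀ t ∈ Ici (0 : ℝ), r' t ∈ Ico 0 1 := by
    intro t ht
    rcases (mem_Ici.1 ht).eq_or_lt with rfl | ht₀
    · simp [h0']
    · exact ⟨(hlt t ht₀).1.le, (hlt t ht₀).2⟩
  have hr'_Ioo : ∀ t ∈ Ici (0 : ℝ), r' t ∈ Ioo (-1) 1 :=
    fun t ht => ⟨by linarith [(hr'_mem t ht).1], (hr'_mem t ht).2⟩
  have hr : ∀ t ∈ Ioi (0 : ℝ), HasDerivAt r (r' t) t :=
    fun t ht => (hr' t (Ioi_subset_Ici_self ht)).hasDerivAt (Ici_mem_nhds ht)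
  have hφ : ∀ t ∈ Ici (0 : ℝ),
      HasDerivWithinAt (artanh ∘ r') ((1 - r' t ^ 2)⁻¹ * r'' t) (Ici 0) t :=
    fun t ht => (hasDerivAt_artanh (hr'_Ioo t ht)).comp_hasDerivWithinAt t (hr'' t ht)
  have hφ_ge : ∀ t ∈ Ici (0 : ℝ), t / (k + 1) ≤ artanh (r' t) := by
    refine div_add_one_le_of_one_le_deriv_add_div_mul k
      (fun t ht => (hφ t ht).continuousWithinAt)
      (fun t ht => (hφ t (Ioi_subset_Ici_self ht)).hasDerivAt (Ici_mem_nhds ht))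
      (by simp [h0']) fun t ht => ?_
    have hcoef : 0 ≤ (k : ℝ) / t := div_nonneg k.cast_nonneg (le_of_lt ht)
    calc (1 : ℝ) = (1 - r' t ^ 2)⁻¹ * r'' t + k / t * r' t := by
          rw [← div_eq_inv_mul]; exact (heq t ht).symm
      _ ≤ (1 - r' t ^ 2)⁻¹ * r'' t + k / t * artanh (r' t) := by
          gcongr; exact self_le_artanh (hr'_mem t (Ioi_subset_Ici_self ht))
  have hr_cont : ContinuousOn r (Ici 0) := fun t ht => (hr' t ht).continuousWithinAt
  refine fun t ht => ⟨?_, ?_⟩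
  · refine le_of_hasDerivAt_le (f := fun t => √((k + 1) ^ 2 + t ^ 2) - (k + 1))
      (f' := fun t => t / √((k + 1) ^ 2 + t ^ 2)) (by fun_prop) hr_cont
      (fun t _ => (hasDerivAt_sqrt_sq_add_sq k.cast_add_one_ne_zero t).sub_const _) hr
      (by simp [h0, sqrt_sq (k.cast_add_one_pos (α := ℝ)).le]) (fun t ht => ?_) t ht
    have ht₀ := Ioi_subset_Ici_self ht
    exact div_sqrt_sq_add_sq_le_of_div_le_artanh k.cast_add_one_pos ht₀ (hr'_Ioo t ht₀)
      (hφ_ge t ht₀)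
  · exact le_of_hasDerivAt_le hr_cont continuousOn_id hr (fun t _ => hasDerivAt_id t)
      (by simp [h0]) (fun t ht => (hlt t ht).2.le) t ht

theorem stmt_4 (n : ℕ) (hn : 2 ≤ n) (r r' r'' : ℝ → ℝ)
    (hr' : ∀ t ∈ Set.Ici (0:ℝ), HasDerivWithinAt r (r' t) (Set.Ici 0) t)
    (hr'' : ∀ t ∈ Set.Ici (0:ℝ), HasDerivWithinAt r' (r'' t) (Set.Ici 0) t)
    (hcont : ContinuousOn r'' (Set.Ici 0))
    (heq : ∀ t ∈ Set.Ioi (0:ℝ),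
      r'' t / (1 - (r' t) ^ 2) + ((n : ℝ) - 1) / t * r' t = 1)
    (h0 : r 0 = 0) (h0' : r' 0 = 0)
    (hlt : ∀ t ∈ Set.Ioi (0:ℝ), 0 < r' t ∧ r' t < 1)
    (hconv : ∀ t ∈ Set.Ici (0:ℝ), 0 < r'' t ∧ r'' t ≤ 1) :
    ∀ t ∈ Set.Ici (0:ℝ),
      Real.sqrt ((n : ℝ) ^ 2 + t ^ 2) - n ≤ r t ∧ r t ≤ t :=
  stmt_4_general n hn r r' r'' hr' hr'' heq h0 h0' hlt
end

section
/- Let n ≥ 2 be an integer, ε ∈ (0,1), and let r ∈ C²([0,∞)) satisfy the regularized equation r''(t)/(1 − r'(t)²) + ((n−1)/(t+ε))·r'(t) = 1 for all t ∈ [0,∞), with |r'(t)| < 1 for all t, r(0) = 0, and r'(0) = ε/n. Then for all t ∈ [0,∞): r''(t) > 0, ε/n ≤ r'(t) < 1, (ε/n)·t ≤ r(t) ≤ t, and r''(t) ≤ 1 − (n−1)ε/(n(t+ε)). -/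
open Set Filter Topology

/-! Solving the equation for `r''` gives `r'' = (1 - r'²) (1 - (n - 1) r' / (t + ε))`, so `r''` has
the sign of the gap `(t + ε) / (n - 1) - r'`. The gap is positive at `0`, and wherever it vanishes
its derivative `1 / (n - 1) - r''` equals `1 / (n - 1) > 0`; hence it never vanishes. Thus
`r'' > 0`, `r'` increases from `ε / n`, and the remaining bounds follow by integrating `r'` and
from `1 - r'² ≤ 1`. -/

section Ici

variable {f f' : ℝ → ℝ} {a : ℝ}

theorem continuousOn_Ici_of_hasDerivWithinAt
    (hf : ∀ t ∈ Ici a, HasDerivWithinAt f (f' t) (Ici a) t) : ContinuousOn f (Ici a) :=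
  fun t ht => (hf t ht).continuousWithinAt

theorem monotoneOn_Ici_of_hasDerivWithinAt_nonneg
    (hf : ∀ t ∈ Ici a, HasDerivWithinAt f (f' t) (Ici a) t) (hf' : ∀ t ∈ Ici a, 0 ≤ f' t) :
    MonotoneOn f (Ici a) := by
  refine monotoneOn_of_hasDerivWithinAt_nonneg (f' := f') (convex_Ici a)
    (continuousOn_Ici_of_hasDerivWithinAt hf) (fun t ht => ?_) (fun t ht => ?_)
  · rw [interior_Ici] at ht ⊢
    exact (hf t (Ioi_subset_Ici_self ht)).mono Ioi_subset_Ici_self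
  · exact hf' t (interior_subset ht)

theorem mul_sub_le_image_sub_of_hasDerivWithinAt_Ici {lo hi : ℝ}
    (hf : ∀ t ∈ Ici a, HasDerivWithinAt f (f' t) (Ici a) t) (hf' : ∀ t ∈ Ici a, f' t ∈ Icc lo hi)
    {t : ℝ} (ht : t ∈ Ici a) : lo * (t - a) ≤ f t - f a ∧ f t - f a ≤ hi * (t - a) := by
  have hlo := monotoneOn_Ici_of_hasDerivWithinAt_nonneg
    (fun s hs => (hf s hs).sub ((hasDerivWithinAt_id s _).const_mul lo))
    (fun s hs => by simpa using (hf' s hs).1) self_mem_Ici ht ht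
  have hhi := monotoneOn_Ici_of_hasDerivWithinAt_nonneg
    (fun s hs => ((hasDerivWithinAt_id s _).const_mul hi).sub (hf s hs))
    (fun s hs => by simpa using (hf' s hs).2) self_mem_Ici ht ht
  simp only [Pi.sub_apply, id] at hlo hhi
  constructor <;> linarith

theorem pos_of_hasDerivWithinAt_of_deriv_pos_of_eq_zero
    (hf : ∀ t ∈ Ici a, HasDerivWithinAt f (f' t) (Ici a) t) (ha : 0 < f a)
    (hzero : ∀ t ∈ Ioi a, f t = 0 → 0 < f' t) : ∀ t ∈ Ici a, 0 < f t := by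
  have hcont := continuousOn_Ici_of_hasDerivWithinAt hf
  have hnonneg : ∀ t ∈ Ici a, 0 ≤ f t := by
    intro t ht
    have := image_le_of_deriv_right_lt_deriv_boundary (f := fun s => -f s) (f' := fun s => -f' s)
      (b := t) (B := fun _ => 0) (B' := fun _ => 0)
      ((hcont.mono Icc_subset_Ici_self).neg)
      (fun s hs => ((hf s hs.1).mono (Ici_subset_Ici.mpr hs.1)).neg)
      (by simpa using ha.le) (fun _ => hasDerivAt_const _ _)
      (fun s hs hfs => by
        have hsa : a < s := hs.1.lt_of_ne (by rintro rfl; exact ha.ne' (neg_eq_zero.mp hfs))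
        simpa using hzero s hsa (neg_eq_zero.mp hfs))
      ⟨ht, le_rfl⟩
    simpa using this
  intro t ht
  rcases (hnonneg t ht).lt_or_eq with hpos | hzero_t
  · exact hpos
  obtain rfl | hat := (show a ≤ t from ht).eq_or_lt
  · exact ha
  have hnhds : Ici a ∈ 𝓝 t := Ici_mem_nhds hat
  have hmin : IsLocalMin f t := mem_of_superset hnhds fun s hs => hzero_t ▸ hnonneg s hs
  exact absurd (hmin.hasDerivAt_eq_zero ((hf t ht).hasDerivAt hnhds))
    (hzero t hat hzero_t.symm).ne'

end Ici

section Algebra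

variable {p q c : ℝ}

theorem eq_mul_of_div_add_mul_eq_one (hp : |p| < 1) (h : q / (1 - p ^ 2) + c * p = 1) :
    q = (1 - p ^ 2) * (1 - c * p) := by
  have hp2 : 1 - p ^ 2 ≠ 0 := by nlinarith [sq_abs p, abs_nonneg p]
  have hq : q / (1 - p ^ 2) = 1 - c * p := by linarith
  rw [div_eq_iff hp2] at hq
  linarith

theorem mul_one_sub_mul_le {e : ℝ} (hp : |p| < 1) (hpos : 0 < (1 - p ^ 2) * (1 - c * p))
    (hc : 0 ≤ c) (he : e ≤ p) : (1 - p ^ 2) * (1 - c * p) ≤ 1 - c * e := by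
  have hp2 : 0 < 1 - p ^ 2 := by nlinarith [sq_abs p, abs_nonneg p]
  have hcp : 0 < 1 - c * p := pos_of_mul_pos_right hpos hp2.le
  nlinarith [mul_le_mul_of_nonneg_left he hc, sq_nonneg p]

theorem one_sub_div_mul_eq_div_mul_sub {m x : ℝ} (hm : m ≠ 0) (hx : x ≠ 0) :
    1 - m / x * p = m / x * (x / m - p) := by
  field_simp

end Algebra

section RegularizedEquation

variable {n : ℕ} {ε : ℝ} {r' r'' : ℝ → ℝ}

theorem second_deriv_pos (hn : 2 ≤ n) (hε : 0 < ε)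
    (hr'' : ∀ t ∈ Ici (0:ℝ), HasDerivWithinAt r' (r'' t) (Ici 0) t)
    (heq : ∀ t ∈ Ici (0:ℝ), r'' t / (1 - r' t ^ 2) + ((n : ℝ) - 1) / (t + ε) * r' t = 1)
    (hsp : ∀ t ∈ Ici (0:ℝ), |r' t| < 1) (h0' : r' 0 = ε / n) :
    ∀ t ∈ Ici (0:ℝ), 0 < r'' t := by
  have hm : (0 : ℝ) < n - 1 := by
    have : (2 : ℝ) ≤ n := by exact_mod_cast hn
    linarith
  have htε : ∀ t ∈ Ici (0 : ℝ), 0 < t + ε := fun t ht => by linarith [mem_Ici.mp ht]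
  have hr''_eq : ∀ t ∈ Ici (0 : ℝ),
      r'' t = (1 - r' t ^ 2) * ((n - 1) / (t + ε) * ((t + ε) / (n - 1) - r' t)) := fun t ht => by
    rw [eq_mul_of_div_add_mul_eq_one (hsp t ht) (heq t ht),
      one_sub_div_mul_eq_div_mul_sub hm.ne' (htε t ht).ne']
  have hgap : ∀ t ∈ Ici (0 : ℝ), 0 < (t + ε) / (n - 1) - r' t := by
    refine pos_of_hasDerivWithinAt_of_deriv_pos_of_eq_zero (f' := fun t => 1 / (n - 1) - r'' t)
      (fun t ht => (((hasDerivWithinAt_id t _).add_const ε).div_const _).sub (hr'' t ht)) ?_ ?_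
    · rw [h0', zero_add, sub_pos, div_lt_div_iff_of_pos_left hε (by linarith) hm]
      linarith
    · intro t ht hzero
      simp only [hr''_eq t (Ioi_subset_Ici_self ht), hzero, mul_zero, sub_zero]
      positivity
  intro t ht
  have hsp2 : 0 < 1 - r' t ^ 2 := by nlinarith [sq_abs (r' t), abs_nonneg (r' t), hsp t ht]
  rw [hr''_eq t ht]
  exact mul_pos hsp2 (mul_pos (div_pos hm (htε t ht)) (hgap t ht))

end RegularizedEquation

theorem stmt_5_general (n : ℕ) (hn : 2 ≤ n) (ε : ℝ) (hε : ε ∈ Set.Ioo (0:ℝ) 1)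
    (r r' r'' : ℝ → ℝ)
    (hr' : ∀ t ∈ Set.Ici (0:ℝ), HasDerivWithinAt r (r' t) (Set.Ici 0) t)
    (hr'' : ∀ t ∈ Set.Ici (0:ℝ), HasDerivWithinAt r' (r'' t) (Set.Ici 0) t)
    (heq : ∀ t ∈ Set.Ici (0:ℝ),
      r'' t / (1 - (r' t) ^ 2) + ((n : ℝ) - 1) / (t + ε) * r' t = 1)
    (hsp : ∀ t ∈ Set.Ici (0:ℝ), |r' t| < 1)
    (h0 : r 0 = 0) (h0' : r' 0 = ε / n) :
    ∀ t ∈ Set.Ici (0:ℝ),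
      0 < r'' t ∧
      (ε / n ≤ r' t ∧ r' t < 1) ∧
      (ε / n * t ≤ r t ∧ r t ≤ t) ∧
      r'' t ≤ 1 - ((n : ℝ) - 1) * ε / (n * (t + ε)) := by
  obtain ⟨hε, -⟩ := hε
  have hpos := second_deriv_pos hn hε hr'' heq hsp h0'
  have hr'_bounds : ∀ t ∈ Ici (0 : ℝ), r' t ∈ Icc (ε / n) 1 := fun t ht =>
    ⟨h0' ▸ monotoneOn_Ici_of_hasDerivWithinAt_nonneg hr'' (fun s hs => (hpos s hs).le)
      self_mem_Ici ht ht, (abs_lt.mp (hsp t ht)).2.le⟩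
  intro t ht
  have hr_bounds := mul_sub_le_image_sub_of_hasDerivWithinAt_Ici hr' hr'_bounds ht
  rw [h0, sub_zero, sub_zero, one_mul] at hr_bounds
  refine ⟨hpos t ht, ⟨(hr'_bounds t ht).1, (abs_lt.mp (hsp t ht)).2⟩, hr_bounds, ?_⟩
  have hrhs : ((n : ℝ) - 1) * ε / (n * (t + ε)) = (n - 1) / (t + ε) * (ε / n) := by
    field_simp
  have hr''_eq := eq_mul_of_div_add_mul_eq_one (hsp t ht) (heq t ht)
  have hc : (0 : ℝ) ≤ (n - 1) / (t + ε) := by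
    have : (2 : ℝ) ≤ n := by exact_mod_cast hn
    exact div_nonneg (by linarith) (by linarith [mem_Ici.mp ht])
  rw [hrhs, hr''_eq]
  exact mul_one_sub_mul_le (hsp t ht) (hr''_eq ▸ hpos t ht) hc (hr'_bounds t ht).1

theorem stmt_5 (n : ℕ) (hn : 2 ≤ n) (ε : ℝ) (hε : ε ∈ Set.Ioo (0:ℝ) 1)
    (r r' r'' : ℝ → ℝ)
    (hr' : ∀ t ∈ Set.Ici (0:ℝ), HasDerivWithinAt r (r' t) (Set.Ici 0) t)
    (hr'' : ∀ t ∈ Set.Ici (0:ℝ), HasDerivWithinAt r' (r'' t) (Set.Ici 0) t)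
    (hcont : ContinuousOn r'' (Set.Ici 0))
    (heq : ∀ t ∈ Set.Ici (0:ℝ),
      r'' t / (1 - (r' t) ^ 2) + ((n : ℝ) - 1) / (t + ε) * r' t = 1)
    (hsp : ∀ t ∈ Set.Ici (0:ℝ), |r' t| < 1)
    (h0 : r 0 = 0) (h0' : r' 0 = ε / n) :
    ∀ t ∈ Set.Ici (0:ℝ),
      0 < r'' t ∧
      (ε / n ≤ r' t ∧ r' t < 1) ∧
      (ε / n * t ≤ r t ∧ r t ≤ t) ∧
      r'' t ≤ 1 - ((n : ℝ) - 1) * ε / (n * (t + ε)) :=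
  stmt_5_general n hn ε hε r r' r'' hr' hr'' heq hsp h0 h0'
end

section
/- Let n ≥ 2 be an integer, ε ∈ (0,1), and let r ∈ C²([0,∞)) satisfy the regularized equation r''(t)/(1 − r'(t)²) + ((n−1)/(t+ε))·r'(t) = 1 on [0,∞) with |r'(t)| < 1 for all t, r(0) = 0, and r'(0) = ε/n. Then for every R > 0 there exists a constant C(R) ∈ (0,1), independent of ε, such that |r'(t)| < 1 − C(R) for all t ∈ [0,R). -/
/-!
Write `v = r'` and `k(t) = (n-1)/(t+ε) ≥ 0`, so that `v' = (1 - v²)(1 - k v)`. Comparison with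
barriers: wherever `v = 0` the equation forces `v' = 1 > 0`, so `v` stays nonnegative; wherever
`v` touches `1 - e^{-2t}/2 ≥ 1/2` it is positive, so the damping term `k v` is nonnegative and
`v' ≤ 1 - v² = e^{-2t} - e^{-4t}/4 < e^{-2t}`, so `v` stays below that barrier. On `[0, R)` this
gives `|v| < 1 - e^{-2R}/2`, uniformly in `ε`.
-/

open Set Real

theorem image_le_of_deriv_right_lt_deriv_boundary_Ici {f f' B B' : ℝ → ℝ} {a : ℝ}
    (hf : ∀ t ∈ Ici a, HasDerivWithinAt f (f' t) (Ici a) t) (hB : ∀ t, HasDerivAt B (B' t) t)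
    (ha : f a ≤ B a) (bound : ∀ t ∈ Ici a, f t = B t → f' t < B' t) :
    ∀ t ∈ Ici a, f t ≤ B t := by
  intro t ht
  refine image_le_of_deriv_right_lt_deriv_boundary (a := a) (b := t)
    (fun s hs => (hf s hs.1).continuousWithinAt.mono Icc_subset_Ici_self)
    (fun s hs => (hf s hs.1).mono (Ici_subset_Ici.mpr hs.1)) ha hB
    (fun s hs => bound s hs.1) ⟨ht, le_rfl⟩

section QuasilinearODE

variable {k r' r'' : ℝ → ℝ}
  (hr' : ∀ t ∈ Ici (0:ℝ), HasDerivWithinAt r' (r'' t) (Ici 0) t)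
  (hode : ∀ t ∈ Ici (0:ℝ), r'' t / (1 - r' t ^ 2) + k t * r' t = 1)
include hr' hode

theorem ode_solution_nonneg (h0 : 0 ≤ r' 0) : ∀ t ∈ Ici (0:ℝ), 0 ≤ r' t := by
  have hneg := image_le_of_deriv_right_lt_deriv_boundary_Ici (fun t ht => (hr' t ht).neg)
    (B := fun _ => 0) (B' := fun _ => 0) (fun _ => hasDerivAt_const _ _) (by simpa using h0)
    (fun t ht hzero => by
      have hode_t := hode t ht
      rw [neg_eq_zero.mp hzero] at hode_t
      norm_num at hode_t
      simp [hode_t])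
  exact fun t ht => neg_nonpos.mp (hneg t ht)

theorem ode_solution_le_one_sub_exp (hk : ∀ t ∈ Ici (0:ℝ), 0 ≤ k t) (h0 : r' 0 ≤ 1 / 2) :
    ∀ t ∈ Ici (0:ℝ), r' t ≤ 1 - exp (-2 * t) / 2 := by
  have hB : ∀ t : ℝ, HasDerivAt (fun s => 1 - exp (-2 * s) / 2) (exp (-2 * t)) t := fun t =>
    ((((hasDerivAt_id t).const_mul (-2)).exp.div_const 2).const_sub 1).congr_deriv
      (by simp only [id, mul_one]; ring)
  refine image_le_of_deriv_right_lt_deriv_boundary_Ici hr' hB (by norm_num [h0]) ?_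
  intro t ht hcontact
  set u := exp (-2 * t)
  have hu_pos : 0 < u := exp_pos _
  have hu_le : u ≤ 1 := exp_le_one_iff.mpr (by linarith [mem_Ici.mp ht])
  have hr'_pos : 0 < r' t := by linarith
  have hden : 0 < 1 - r' t ^ 2 := by rw [hcontact]; nlinarith
  have hr'' : r'' t = (1 - r' t ^ 2) * (1 - k t * r' t) := by
    have := hode t ht
    field_simp at this
    linarith
  have hdamp : 0 ≤ (1 - r' t ^ 2) * (k t * r' t) := by
    have := hk t ht
    positivity
  calc r'' t = (1 - r' t ^ 2) - (1 - r' t ^ 2) * (k t * r' t) := by rw [hr'']; ring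
    _ ≤ 1 - r' t ^ 2 := by linarith
    _ = u - u ^ 2 / 4 := by rw [hcontact]; ring
    _ < u := by nlinarith

end QuasilinearODE

theorem stmt_6 (n : ℕ) (hn : 2 ≤ n) :
    ∀ R > (0:ℝ), ∃ C ∈ Set.Ioo (0:ℝ) 1,
      ∀ ε ∈ Set.Ioo (0:ℝ) 1, ∀ r r' r'' : ℝ → ℝ,
        (∀ t ∈ Set.Ici (0:ℝ), HasDerivWithinAt r (r' t) (Set.Ici 0) t) →
        (∀ t ∈ Set.Ici (0:ℝ), HasDerivWithinAt r' (r'' t) (Set.Ici 0) t) →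
        ContinuousOn r'' (Set.Ici 0) →
        (∀ t ∈ Set.Ici (0:ℝ),
          r'' t / (1 - (r' t) ^ 2) + ((n : ℝ) - 1) / (t + ε) * r' t = 1) →
        (∀ t ∈ Set.Ici (0:ℝ), |r' t| < 1) →
        r 0 = 0 → r' 0 = ε / n →
        ∀ t ∈ Set.Ico (0:ℝ) R, |r' t| < 1 - C := by
  intro R hR
  have hexpR : exp (-2 * R) < 1 := exp_lt_one_iff.mpr (by linarith)
  refine ⟨exp (-2 * R) / 2, ⟨by positivity, by linarith⟩, ?_⟩
  intro ε ⟨hε0, _⟩ r r' r'' _ hr' _ hode _ _ hr'0 t ⟨ht0, htR⟩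
  have hn' : (2:ℝ) ≤ n := by exact_mod_cast hn
  have hk : ∀ t ∈ Ici (0:ℝ), 0 ≤ ((n:ℝ) - 1) / (t + ε) := fun t ht => by
    have : (0:ℝ) ≤ t := ht
    exact div_nonneg (by linarith) (by linarith)
  have hr'0_le : r' 0 ≤ 1 / 2 := by
    rw [hr'0, div_le_iff₀ (by linarith)]; nlinarith
  have hlow := ode_solution_nonneg hr' hode (by rw [hr'0]; positivity) t ht0
  have hup := ode_solution_le_one_sub_exp hr' hode hk hr'0_le t ht0
  have hexp : exp (-2 * R) < exp (-2 * t) := exp_lt_exp.mpr (by linarith)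
  rw [abs_of_nonneg hlow]
  linarith
end

section
/- Let n ≥ 2 be an integer and let r ∈ C^∞([0,∞)) satisfy r''(t)/(1 − r'(t)²) + ((n−1)/t)·r'(t) = 1 for all t ∈ (0,∞), with r(0) = 0, r'(0) = 0, and 0 ≤ r'(t) < 1 for all t ∈ [0,∞). Then the function u : ℝⁿ → ℝ defined by u(x) = r(|x|) is differentiable on ℝⁿ with |∇u(x)| < 1 for all x ∈ ℝⁿ, and at every x ≠ 0 it satisfies the translating soliton equation Δu(x) + D²u(x)(∇u(x), ∇u(x))/(1 − |∇u(x)|²) = 1. -/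
open Set Filter Topology
open RealInnerProductSpace

lemma norm_hasFDerivAt' {E : Type*} [NormedAddCommGroup E] [InnerProductSpace ℝ E]
    {x : E} (hx : x ≠ 0) :
    HasFDerivAt (fun y : E => ‖y‖) (‖x‖⁻¹ • (innerSL ℝ x : E →L[ℝ] ℝ)) x := by
  have hxn : ‖x‖ ≠ 0 := norm_ne_zero_iff.2 hx
  have hxx : ⟪x, x⟫ ≠ 0 := by
    rw [real_inner_self_eq_norm_mul_norm]; positivity
  have h1 : HasFDerivAt (fun y : E => ⟪y, y⟫) _ x :=
    (hasFDerivAt_id x).inner ℝ (hasFDerivAt_id x)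
  have h2 := HasDerivAt.comp_hasFDerivAt (f := fun y : E => ⟪y, y⟫) x
    (Real.hasDerivAt_sqrt hxx) h1
  have hfun : (Real.sqrt ∘ fun y : E => ⟪y, y⟫) = fun y : E => ‖y‖ := by
    funext y
    simp only [Function.comp_apply, real_inner_self_eq_norm_mul_norm,
      Real.sqrt_mul_self (norm_nonneg y)]
  rw [hfun] at h2
  refine h2.congr_fderiv ?_
  symm
  ext v
  simp only [ContinuousLinearMap.smul_apply, innerSL_apply_apply, ContinuousLinearMap.coe_smul',
    Pi.smul_apply, ContinuousLinearMap.coe_comp', Function.comp_apply,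
    fderivInnerCLM_apply, ContinuousLinearMap.prod_apply, ContinuousLinearMap.coe_id', id_eq,
    smul_eq_mul]
  rw [real_inner_self_eq_norm_mul_norm, Real.sqrt_mul_self (norm_nonneg x),
    real_inner_comm v x]
  field_simp
  ring

lemma alg_aux (nn a b t : ℝ) (ht : 0 < t) (hA : 1 - a ^ 2 ≠ 0)
    (heq : b / (1 - a ^ 2) + (nn - 1) / t * a = 1) :
    nn * (a / t * 1) + (b * t - a * 1) / t ^ 2 * t⁻¹ * t ^ 2 +
      (a / t * a ^ 2 + (b * t - a * 1) / t ^ 2 * (t⁻¹ * (a * t)) * (a * t)) / (1 - a ^ 2)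
      = 1 := by
  have ht' : t ≠ 0 := ht.ne'
  have hb : b = (1 - a ^ 2) * (1 - (nn - 1) / t * a) := by
    have h1 : b / (1 - a ^ 2) = 1 - (nn - 1) / t * a := by linarith
    field_simp at h1
    field_simp
    linarith
  rw [hb]
  field_simp
  ring

theorem stmt_7 (n : ℕ) (hn : 2 ≤ n) (r r' r'' : ℝ → ℝ)
    (hsmooth : ContDiffOn ℝ (⊤ : ℕ∞) r (Set.Ici 0))
    (hr' : ∀ t ∈ Set.Ici (0:ℝ), HasDerivWithinAt r (r' t) (Set.Ici 0) t)
    (hr'' : ∀ t ∈ Set.Ici (0:ℝ), HasDerivWithinAt r' (r'' t) (Set.Ici 0) t)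
    (heq : ∀ t ∈ Set.Ioi (0:ℝ),
      r'' t / (1 - (r' t) ^ 2) + ((n : ℝ) - 1) / t * r' t = 1)
    (h0 : r 0 = 0) (h0' : r' 0 = 0)
    (hlt : ∀ t ∈ Set.Ici (0:ℝ), 0 ≤ r' t ∧ r' t < 1)
    (u : EuclideanSpace ℝ (Fin n) → ℝ)
    (hu : ∀ x, u x = r ‖x‖) :
    Differentiable ℝ u ∧
    (∀ x, ‖gradient u x‖ < 1) ∧
    (∀ x : EuclideanSpace ℝ (Fin n), x ≠ 0 →
      (∑ i : Fin n, iteratedFDeriv ℝ 2 u x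
          ![EuclideanSpace.single i 1, EuclideanSpace.single i 1]) +
        iteratedFDeriv ℝ 2 u x ![gradient u x, gradient u x] /
          (1 - ‖gradient u x‖ ^ 2) = 1) := by
  set F : EuclideanSpace ℝ (Fin n) → EuclideanSpace ℝ (Fin n) :=
    fun y => (r' ‖y‖ / ‖y‖) • y with hF
  have hufun : u = fun y => r ‖y‖ := funext hu
  -- derivative formula everywhere
  have key : ∀ x : EuclideanSpace ℝ (Fin n),
      HasFDerivAt u (innerSL ℝ (F x) : EuclideanSpace ℝ (Fin n) →L[ℝ] ℝ) x := by
    intro x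
    rcases eq_or_ne x 0 with rfl | hx
    · have hF0 : F 0 = (0 : EuclideanSpace ℝ (Fin n)) := by simp [hF]
      rw [hF0, map_zero]
      rw [hasFDerivAt_iff_isLittleO_nhds_zero]
      have hlit : (fun t => r t) =o[𝓝[Set.Ici 0] 0] (fun t : ℝ => t) := by
        have := (hr' 0 Set.self_mem_Ici)
        rw [hasDerivWithinAt_iff_isLittleO] at this
        simpa [h0, h0'] using this
      have htend : Tendsto (fun y : EuclideanSpace ℝ (Fin n) => ‖y‖) (𝓝 0)
          (𝓝[Set.Ici 0] 0) := by
        rw [tendsto_nhdsWithin_iff]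
        refine ⟨by simpa using (continuous_norm (E := EuclideanSpace ℝ (Fin n))).tendsto 0, ?_⟩
        exact Eventually.of_forall fun y => norm_nonneg y
      have h2 : (fun y : EuclideanSpace ℝ (Fin n) => r ‖y‖) =o[𝓝 0]
          (fun y : EuclideanSpace ℝ (Fin n) => ‖y‖) := hlit.comp_tendsto htend
      have h3 : (fun y : EuclideanSpace ℝ (Fin n) => r ‖y‖) =o[𝓝 0]
          (fun y : EuclideanSpace ℝ (Fin n) => y) := h2.of_norm_right
      simpa [hufun, h0] using h3
    · have ht : (0:ℝ) < ‖x‖ := norm_pos_iff.2 hx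
      have hderiv : HasDerivAt r (r' ‖x‖) ‖x‖ :=
        (hr' ‖x‖ ht.le).hasDerivAt (Ici_mem_nhds ht)
      have hcomp := hderiv.comp_hasFDerivAt x (norm_hasFDerivAt' hx)
      rw [hufun]
      refine hcomp.congr_fderiv ?_
      symm
      ext v
      simp only [hF, innerSL_apply_apply, ContinuousLinearMap.smul_apply, smul_eq_mul,
        real_inner_smul_left]
      field_simp
  have hdiff : Differentiable ℝ u := fun x => (key x).differentiableAt
  have hgrad : ∀ x : EuclideanSpace ℝ (Fin n), gradient u x = F x := by
    intro x
    refine HasGradientAt.gradient ?_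
    rw [hasGradientAt_iff_hasFDerivAt]
    exact key x
  have hnormgrad : ∀ x : EuclideanSpace ℝ (Fin n), ‖gradient u x‖ = r' ‖x‖ := by
    intro x
    rw [hgrad]
    rcases eq_or_ne x 0 with rfl | hx
    · simp [hF, h0']
    · have ht : (0:ℝ) < ‖x‖ := norm_pos_iff.2 hx
      have ha := (hlt ‖x‖ ht.le).1
      rw [hF]
      simp only [norm_smul, Real.norm_eq_abs]
      rw [abs_of_nonneg (div_nonneg ha ht.le), div_mul_cancel₀ _ ht.ne']
  refine ⟨hdiff, fun x => by rw [hnormgrad]; exact (hlt ‖x‖ (norm_nonneg x)).2, ?_⟩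
  intro x hx
  have ht : (0:ℝ) < ‖x‖ := norm_pos_iff.2 hx
  have ha0 := (hlt ‖x‖ ht.le).1
  have ha1 := (hlt ‖x‖ ht.le).2
  have hA : 1 - (r' ‖x‖) ^ 2 ≠ 0 := by nlinarith
  have hφ : HasDerivAt (fun s => r' s / s)
      ((r'' ‖x‖ * ‖x‖ - r' ‖x‖ * 1) / ‖x‖ ^ 2) ‖x‖ :=
    ((hr'' ‖x‖ ht.le).hasDerivAt (Ici_mem_nhds ht)).div (hasDerivAt_id ‖x‖) ht.ne'
  have hc := hφ.comp_hasFDerivAt x (norm_hasFDerivAt' hx)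
  have hFd : HasFDerivAt F
      ((r' ‖x‖ / ‖x‖) • ContinuousLinearMap.id ℝ (EuclideanSpace ℝ (Fin n)) +
        (((r'' ‖x‖ * ‖x‖ - r' ‖x‖ * 1) / ‖x‖ ^ 2) •
          (‖x‖⁻¹ • (innerSL ℝ x : EuclideanSpace ℝ (Fin n) →L[ℝ] ℝ))).smulRight x) x := by
    have := hc.smul (hasFDerivAt_id x)
    exact this
  have hG := ((innerSL ℝ : EuclideanSpace ℝ (Fin n) →L[ℝ]
      (EuclideanSpace ℝ (Fin n) →L[ℝ] ℝ)).hasFDerivAt).comp x hFd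
  have hfd1 : (fderiv ℝ u) = fun y =>
      (innerSL ℝ (F y) : EuclideanSpace ℝ (Fin n) →L[ℝ] ℝ) :=
    funext fun y => (key y).fderiv
  have h2d : fderiv ℝ (fderiv ℝ u) x =
      (innerSL ℝ : EuclideanSpace ℝ (Fin n) →L[ℝ]
          (EuclideanSpace ℝ (Fin n) →L[ℝ] ℝ)).comp
        ((r' ‖x‖ / ‖x‖) • ContinuousLinearMap.id ℝ (EuclideanSpace ℝ (Fin n)) +
          (((r'' ‖x‖ * ‖x‖ - r' ‖x‖ * 1) / ‖x‖ ^ 2) •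
            (‖x‖⁻¹ • (innerSL ℝ x : EuclideanSpace ℝ (Fin n) →L[ℝ] ℝ))).smulRight x) := by
    rw [hfd1]; exact hG.fderiv
  have happ : ∀ v w : EuclideanSpace ℝ (Fin n), iteratedFDeriv ℝ 2 u x ![v, w] =
      (r' ‖x‖ / ‖x‖) * ⟪v, w⟫ +
        ((r'' ‖x‖ * ‖x‖ - r' ‖x‖ * 1) / ‖x‖ ^ 2) * (‖x‖⁻¹ * ⟪x, v⟫) * ⟪x, w⟫ := by
    intro v w
    rw [iteratedFDeriv_two_apply]
    simp only [Matrix.cons_val_zero, Matrix.cons_val_one, Matrix.head_cons]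
    rw [h2d]
    simp only [ContinuousLinearMap.coe_comp', Function.comp_apply,
      ContinuousLinearMap.add_apply, ContinuousLinearMap.smul_apply,
      ContinuousLinearMap.coe_id', id_eq, ContinuousLinearMap.smulRight_apply,
      innerSL_apply_apply, smul_eq_mul, map_add, map_smul, inner_add_left,
      real_inner_smul_left]
  rw [hgrad]
  rw [show ‖F x‖ = r' ‖x‖ from by rw [← hgrad, hnormgrad]]
  have heqx := heq ‖x‖ ht
  have hxsum : ∑ i : Fin n, x i * x i = ‖x‖ ^ 2 := by
    rw [← real_inner_self_eq_norm_sq x]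
    simp only [PiLp.inner_apply, RCLike.inner_apply, conj_trivial]
  have hFx1 : ⟪F x, F x⟫ = (r' ‖x‖) ^ 2 := by
    rw [real_inner_self_eq_norm_sq, ← hgrad, hnormgrad]
  have hFx2 : ⟪x, F x⟫ = r' ‖x‖ * ‖x‖ := by
    rw [hF]
    rw [real_inner_smul_right, real_inner_self_eq_norm_sq x]
    field_simp
  have hinner1 : ∀ i : Fin n, ⟪(EuclideanSpace.single i 1 : EuclideanSpace ℝ (Fin n)),
      (EuclideanSpace.single i 1 : EuclideanSpace ℝ (Fin n))⟫ = (1:ℝ) := by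
    intro i; simp [EuclideanSpace.inner_single_left]
  have hinner2 : ∀ i : Fin n, ⟪x, (EuclideanSpace.single i 1 : EuclideanSpace ℝ (Fin n))⟫
      = x i := by
    intro i; simp [EuclideanSpace.inner_single_right]
  simp only [happ, hinner1, hinner2, hFx1, hFx2]
  rw [Finset.sum_add_distrib, Finset.sum_const, Finset.card_univ, Fintype.card_fin]
  have hterm : ∀ i : Fin n, (r'' ‖x‖ * ‖x‖ - r' ‖x‖ * 1) / ‖x‖ ^ 2 * (‖x‖⁻¹ * x i) * x i
      = ((r'' ‖x‖ * ‖x‖ - r' ‖x‖ * 1) / ‖x‖ ^ 2 * ‖x‖⁻¹) * (x i * x i) := by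
    intro i; ring
  rw [Finset.sum_congr rfl fun i _ => hterm i, ← Finset.mul_sum, hxsum]
  rw [nsmul_eq_mul]
  exact alg_aux n (r' ‖x‖) (r'' ‖x‖) ‖x‖ ht hA heqx
end

section
/- Let n ≥ 2 be an integer, let x₀ ∈ ℝⁿ, let f : [0,∞) → ℝ, and suppose u(x) = f(|x − x₀|) defines a C² function u : ℝⁿ → ℝ with |∇u(x)| < 1 for all x ∈ ℝⁿ satisfying the translating soliton equation Δu(x) + D²u(x)(∇u(x), ∇u(x))/(1 − |∇u(x)|²) = 1 for all x ∈ ℝⁿ. Then the function r(t) := f(t) − f(0) is a C² solution of r''(t)/(1 − r'(t)²) + ((n−1)/t)·r'(t) = 1 on (0,∞) with r(0) = 0, r'(0) = 0, and 0 < r'(t) < 1 for all t ∈ (0,∞); in particular u(x) = r(|x − x₀|) + u(x₀). -/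
/-!
Restricting `u` to a line through `x₀` gives an even C² profile `F` with `u x = F ‖x - x₀‖`.
Away from `x₀`, with `ρ = ‖x - x₀‖`, the gradient of `u` is `F'(ρ)/ρ • (x - x₀)` and the
Hessian is `F''(ρ)` in the radial direction and `F'(ρ)/ρ` on its orthogonal complement, so the
soliton equation becomes the ODE `F''/(1 - F'²) + (n-1)/ρ F' = 1`. Along it,
`ρ ↦ ρ^(n-1) F'/√(1 - F'²)` has derivative `ρ^(n-1)/√(1 - F'²) > 0` and vanishes at `0`,
hence `F' > 0` on `(0, ∞)`.
-/

open Set Filter Topology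
open scoped RealInnerProductSpace

theorem hasDerivAt_fderiv_apply_line {E F : Type*} [NormedAddCommGroup E] [NormedSpace ℝ E]
    [NormedAddCommGroup F] [NormedSpace ℝ F] {u : E → F} (hu : ContDiff ℝ 2 u) (x v : E) :
    HasDerivAt (fun r : ℝ => fderiv ℝ u (x + r • v) v) (iteratedFDeriv ℝ 2 u x ![v, v]) 0 := by
  have hline : HasDerivAt (fun r : ℝ => x + r • v) v 0 := by
    simpa using ((hasDerivAt_id (0 : ℝ)).smul_const v).const_add x
  have hF : DifferentiableAt ℝ (fderiv ℝ u) (x + (0 : ℝ) • v) :=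
    (hu.fderiv_right (m := 1) (by norm_num)).differentiable (by norm_num) _
  rw [iteratedFDeriv_two_apply]
  simpa [Function.comp_def] using
    (ContinuousLinearMap.apply ℝ F v).hasFDerivAt.comp_hasDerivAt 0
      (hF.hasFDerivAt.comp_hasDerivAt 0 hline)

theorem deriv_zero_of_even {f : ℝ → ℝ} (hf : ∀ x, f (-x) = f x) : deriv f 0 = 0 := by
  have h := deriv_comp_neg (f := f) (x := 0)
  simp only [hf, neg_zero] at h
  linarith

theorem HasDerivAt.div_sqrt_one_sub_sq {w : ℝ → ℝ} {w' t : ℝ} (hw : HasDerivAt w w' t)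
    (ht : w t ^ 2 < 1) :
    HasDerivAt (fun s => w s / √(1 - w s ^ 2)) (w' / √(1 - w t ^ 2) ^ 3) t := by
  have hpos : 0 < 1 - w t ^ 2 := by linarith
  have hS := ((hw.pow 2).const_sub 1).sqrt hpos.ne'
  refine (hw.div hS (Real.sqrt_pos.mpr hpos).ne').congr_deriv ?_
  have hS2 : √(1 - w t ^ 2) ^ 2 = 1 - w t ^ 2 := Real.sq_sqrt hpos.le
  simp only [Pi.pow_apply] at hS ⊢
  field_simp
  linear_combination (2 * w') * hS2

theorem pos_of_radial_soliton_ode {m : ℝ} (hm : 0 ≤ m) {w : ℝ → ℝ} (hcont : ContinuousOn w (Ici 0))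
    (hdiff : ∀ t > 0, DifferentiableAt ℝ w t) (hlt : ∀ t ≥ 0, |w t| < 1) (h0 : w 0 = 0)
    (hode : ∀ t > 0, deriv w t / (1 - w t ^ 2) + m / t * w t = 1) {t : ℝ} (ht : 0 < t) :
    0 < w t := by
  have hsq : ∀ s ≥ 0, 0 < 1 - w s ^ 2 := fun s hs => by
    nlinarith [sq_abs (w s), abs_nonneg (w s), hlt s hs]
  set ψ : ℝ → ℝ := fun s => s ^ m * (w s / √(1 - w s ^ 2))
  have hderiv : ∀ s > 0, HasDerivAt ψ (s ^ m / √(1 - w s ^ 2)) s := by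
    intro s hs
    have hS2 : √(1 - w s ^ 2) ^ 2 = 1 - w s ^ 2 := Real.sq_sqrt (hsq s hs.le).le
    have hw' : deriv w s = (1 - m / s * w s) * (1 - w s ^ 2) :=
      (div_eq_iff (hsq s hs.le).ne').mp (eq_sub_of_add_eq (hode s hs))
    refine ((Real.hasDerivAt_rpow_const (Or.inl hs.ne')).mul
      ((hdiff s hs).hasDerivAt.div_sqrt_one_sub_sq (by linarith [hsq s hs.le]))).congr_deriv ?_
    have hS : √(1 - w s ^ 2) ≠ 0 := (Real.sqrt_pos.mpr (hsq s hs.le)).ne'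
    rw [hw', Real.rpow_sub_one hs.ne']
    field_simp
    linear_combination (m * w s - s) * hS2
  have hmono : StrictMonoOn ψ (Ici 0) := by
    refine strictMonoOn_of_deriv_pos (convex_Ici 0) ?_ fun s hs => ?_
    · exact (Real.continuous_rpow_const hm).continuousOn.mul
        (hcont.div (continuousOn_const.sub (hcont.pow 2)).sqrt
          fun s hs => (Real.sqrt_pos.mpr (hsq s hs)).ne')
    · rw [interior_Ici] at hs
      rw [(hderiv s hs).deriv]
      exact div_pos (Real.rpow_pos_of_pos hs m) (Real.sqrt_pos.mpr (hsq s (le_of_lt hs)))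
  have hψ : 0 < ψ t := by
    simpa [ψ, h0] using hmono self_mem_Ici ht.le ht
  exact (div_pos_iff_of_pos_right (Real.sqrt_pos.mpr (hsq t ht.le))).mp
    (pos_of_mul_pos_right hψ (Real.rpow_nonneg ht.le m))

section radial
variable {E : Type*} [NormedAddCommGroup E] [InnerProductSpace ℝ E]

theorem exists_contDiff_profile_of_radial [Nontrivial E] {u : E → ℝ} {f : ℝ → ℝ} {x₀ : E}
    (hu : ∀ x, u x = f ‖x - x₀‖) (hu2 : ContDiff ℝ 2 u) :
    ∃ F : ℝ → ℝ, ContDiff ℝ 2 F ∧ (∀ x, u x = F ‖x - x₀‖) ∧ EqOn f F (Ici 0) ∧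
      deriv F 0 = 0 := by
  obtain ⟨e, he⟩ := exists_norm_eq E zero_le_one
  have hline : ∀ s : ℝ, u (x₀ + s • e) = f |s| := fun s => by simp [hu, norm_smul, he]
  refine ⟨fun s => u (x₀ + s • e), hu2.comp (contDiff_const.add (contDiff_id.smul contDiff_const)),
    fun x => by simp only [hline, abs_norm, hu], fun s hs => by simp [hline, abs_of_nonneg hs.out],
    deriv_zero_of_even fun s => by simp only [hline, abs_neg]⟩

variable {u : E → ℝ} {F : ℝ → ℝ} {x₀ a : E}

theorem hasFDerivAt_radial (hu : ∀ x, u x = F ‖x - x₀‖) (ha : a ≠ 0)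
    (hF : DifferentiableAt ℝ F ‖a‖) :
    HasFDerivAt u ((deriv F ‖a‖ / ‖a‖) • innerSL ℝ a) (x₀ + a) := by
  have hnorm := ((hasFDerivAt_id (x₀ + a)).sub_const x₀).norm_sq.sqrt (by simpa using ha)
  simp only [id, add_sub_cancel_left, Real.sqrt_sq (norm_nonneg _)] at hnorm
  have h := hF.hasDerivAt.comp_hasFDerivAt_of_eq (x₀ + a) hnorm (by simp)
  rw [show u = F ∘ fun x => ‖x - x₀‖ from funext hu]
  refine h.congr_fderiv ?_
  ext b
  simp only [one_div, mul_inv_rev, ContinuousLinearMap.comp_id, smul_apply, coe_innerSL_apply,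
    nsmul_eq_mul, Nat.cast_ofNat, smul_eq_mul]
  field_simp

theorem fderiv_radial_apply (hu : ∀ x, u x = F ‖x - x₀‖) (ha : a ≠ 0)
    (hF : DifferentiableAt ℝ F ‖a‖) (b : E) :
    fderiv ℝ u (x₀ + a) b = deriv F ‖a‖ * ⟪a, b⟫ / ‖a‖ := by
  rw [(hasFDerivAt_radial hu ha hF).fderiv, smul_apply, coe_innerSL_apply, smul_eq_mul]
  ring

theorem iteratedFDeriv_two_radial (hu : ∀ x, u x = F ‖x - x₀‖) (hu2 : ContDiff ℝ 2 u)
    (hF : ContDiff ℝ 2 F) (ha : a ≠ 0) (b : E) :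
    iteratedFDeriv ℝ 2 u (x₀ + a) ![b, b] =
      deriv (deriv F) ‖a‖ * (⟪a, b⟫ / ‖a‖) ^ 2 +
        deriv F ‖a‖ / ‖a‖ * (‖b‖ ^ 2 - (⟪a, b⟫ / ‖a‖) ^ 2) := by
  have hF1 : Differentiable ℝ F := hF.differentiable (by norm_num)
  have hF2 : Differentiable ℝ (deriv F) := hF.differentiable_deriv_two
  have hline : HasDerivAt (fun r : ℝ => a + r • b) b 0 := by
    simpa using ((hasDerivAt_id (0 : ℝ)).smul_const b).const_add a
  have hne : ∀ᶠ r : ℝ in 𝓝 0, a + r • b ≠ 0 :=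
    hline.continuousAt.eventually_ne (by simpa using ha)
  have hfderiv : (fun r : ℝ => fderiv ℝ u (x₀ + a + r • b) b) =ᶠ[𝓝 0]
      fun r => deriv F ‖a + r • b‖ * ⟪a + r • b, b⟫ / ‖a + r • b‖ := by
    filter_upwards [hne] with r hr
    rw [add_assoc, fderiv_radial_apply hu hr (hF1 _)]
  have hnorm : HasDerivAt (fun r : ℝ => ‖a + r • b‖) (⟪a, b⟫ / ‖a‖) 0 := by
    have h := hline.norm_sq.sqrt (by simpa using ha)
    simp only [zero_smul, add_zero, Real.sqrt_sq (norm_nonneg _)] at h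
    refine h.congr_deriv ?_
    field_simp
  have hinner : HasDerivAt (fun r : ℝ => ⟪a + r • b, b⟫) (‖b‖ ^ 2) 0 := by
    simpa using hline.inner ℝ (hasDerivAt_const (0 : ℝ) b)
  have hprofile := (((hF2 ‖a‖).hasDerivAt.comp_of_eq 0 hnorm (by simp)).mul hinner).div hnorm
    (norm_ne_zero_iff.mpr (by simpa using ha))
  have h := (hasDerivAt_fderiv_apply_line hu2 (x₀ + a) b).unique
    (hprofile.congr_of_eventuallyEq hfderiv)
  rw [h]
  simp only [Pi.mul_apply, Function.comp_apply, zero_smul, add_zero]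
  field_simp
  ring

theorem sum_iteratedFDeriv_two_radial {ι : Type*} [Fintype ι] (B : OrthonormalBasis ι ℝ E)
    (hu : ∀ x, u x = F ‖x - x₀‖) (hu2 : ContDiff ℝ 2 u) (hF : ContDiff ℝ 2 F) (ha : a ≠ 0) :
    ∑ i, iteratedFDeriv ℝ 2 u (x₀ + a) ![B i, B i] =
      deriv (deriv F) ‖a‖ + ((Fintype.card ι : ℝ) - 1) * (deriv F ‖a‖ / ‖a‖) := by
  have hparseval : ∑ i, (⟪a, B i⟫ / ‖a‖) ^ 2 = 1 := by
    have h := B.sum_inner_mul_inner a a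
    simp only [real_inner_self_eq_norm_sq, real_inner_comm a, ← sq] at h
    simp only [div_pow, ← Finset.sum_div, h]
    field_simp
  simp only [iteratedFDeriv_two_radial hu hu2 hF ha, B.orthonormal.1, one_pow,
    Finset.sum_add_distrib, ← Finset.mul_sum, Finset.sum_sub_distrib, hparseval,
    Finset.sum_const, Finset.card_univ, nsmul_eq_mul, mul_one]
  ring

section gradient
variable [CompleteSpace E]

theorem gradient_radial (hu : ∀ x, u x = F ‖x - x₀‖) (ha : a ≠ 0)
    (hF : DifferentiableAt ℝ F ‖a‖) : gradient u (x₀ + a) = (deriv F ‖a‖ / ‖a‖) • a := by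
  have hdual : InnerProductSpace.toDual ℝ E ((deriv F ‖a‖ / ‖a‖) • a) =
      (deriv F ‖a‖ / ‖a‖) • innerSL ℝ a := by
    ext b
    simp
  refine HasGradientAt.gradient (hasGradientAt_iff_hasFDerivAt.mpr ?_)
  rw [hdual]
  exact hasFDerivAt_radial hu ha hF

theorem norm_gradient_radial (hu : ∀ x, u x = F ‖x - x₀‖) (ha : a ≠ 0)
    (hF : DifferentiableAt ℝ F ‖a‖) : ‖gradient u (x₀ + a)‖ = |deriv F ‖a‖| := by
  rw [gradient_radial hu ha hF, norm_smul, Real.norm_eq_abs, abs_div, abs_norm,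
    div_mul_cancel₀ _ (norm_ne_zero_iff.mpr ha)]

theorem iteratedFDeriv_two_radial_gradient (hu : ∀ x, u x = F ‖x - x₀‖) (hu2 : ContDiff ℝ 2 u)
    (hF : ContDiff ℝ 2 F) (ha : a ≠ 0) :
    iteratedFDeriv ℝ 2 u (x₀ + a) ![gradient u (x₀ + a), gradient u (x₀ + a)] =
      deriv F ‖a‖ ^ 2 * deriv (deriv F) ‖a‖ := by
  have ha' : ‖a‖ ≠ 0 := norm_ne_zero_iff.mpr ha
  rw [gradient_radial hu ha (hF.differentiable (by norm_num) _),
    iteratedFDeriv_two_radial hu hu2 hF ha, real_inner_smul_right, real_inner_self_eq_norm_sq,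
    norm_smul, Real.norm_eq_abs, mul_pow, sq_abs]
  field_simp
  ring

theorem radial_soliton_ode [Nontrivial E] {ι : Type*} [Fintype ι] (B : OrthonormalBasis ι ℝ E)
    (hu : ∀ x, u x = F ‖x - x₀‖) (hu2 : ContDiff ℝ 2 u) (hF : ContDiff ℝ 2 F)
    (hsp : ∀ x, ‖gradient u x‖ < 1)
    (heq : ∀ x, ∑ i, iteratedFDeriv ℝ 2 u x ![B i, B i] +
      iteratedFDeriv ℝ 2 u x ![gradient u x, gradient u x] / (1 - ‖gradient u x‖ ^ 2) = 1)
    {t : ℝ} (ht : 0 < t) :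
    deriv (deriv F) t / (1 - deriv F t ^ 2) + ((Fintype.card ι : ℝ) - 1) / t * deriv F t = 1 ∧
      |deriv F t| < 1 := by
  obtain ⟨a, rfl⟩ := exists_norm_eq E ht.le
  have ha : a ≠ 0 := norm_pos_iff.mp ht
  have hnorm := norm_gradient_radial hu ha (hF.differentiable (by norm_num) ‖a‖)
  have hlt := hsp (x₀ + a)
  rw [hnorm] at hlt
  refine ⟨?_, hlt⟩
  have heq := heq (x₀ + a)
  rw [sum_iteratedFDeriv_two_radial B hu hu2 hF ha,
    iteratedFDeriv_two_radial_gradient hu hu2 hF ha, hnorm, sq_abs] at heq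
  have hpos : 0 < 1 - deriv F ‖a‖ ^ 2 := by
    nlinarith [abs_nonneg (deriv F ‖a‖), sq_abs (deriv F ‖a‖)]
  have ha' : ‖a‖ ≠ 0 := ht.ne'
  field_simp at heq ⊢
  linear_combination heq

end gradient

end radial

theorem stmt_8 (n : ℕ) (hn : 2 ≤ n) (x₀ : EuclideanSpace ℝ (Fin n))
    (f : ℝ → ℝ) (u : EuclideanSpace ℝ (Fin n) → ℝ)
    (hu : ∀ x, u x = f ‖x - x₀‖)
    (hC2 : ContDiff ℝ 2 u)
    (hsp : ∀ x, ‖gradient u x‖ < 1)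
    (heq : ∀ x : EuclideanSpace ℝ (Fin n),
      (∑ i : Fin n, iteratedFDeriv ℝ 2 u x
          ![EuclideanSpace.single i 1, EuclideanSpace.single i 1]) +
        iteratedFDeriv ℝ 2 u x ![gradient u x, gradient u x] /
          (1 - ‖gradient u x‖ ^ 2) = 1) :
    ContDiffOn ℝ 2 (fun t => f t - f 0) (Set.Ici 0) ∧
    (∀ t ∈ Set.Ioi (0:ℝ),
      deriv (deriv (fun s => f s - f 0)) t /
          (1 - (deriv (fun s => f s - f 0) t) ^ 2) +
        ((n : ℝ) - 1) / t * deriv (fun s => f s - f 0) t = 1) ∧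
    (fun t => f t - f 0) 0 = 0 ∧
    derivWithin (fun s => f s - f 0) (Set.Ici 0) 0 = 0 ∧
    (∀ t ∈ Set.Ioi (0:ℝ),
      0 < deriv (fun s => f s - f 0) t ∧ deriv (fun s => f s - f 0) t < 1) ∧
    (∀ x, u x = (fun t => f t - f 0) ‖x - x₀‖ + u x₀) := by
  have : NeZero n := ⟨by omega⟩
  obtain ⟨F, hF, hradial, hfF, hF'0⟩ := exists_contDiff_profile_of_radial hu hC2
  have hsol : ∀ t > 0, deriv (deriv F) t / (1 - deriv F t ^ 2) + ((n : ℝ) - 1) / t * deriv F t = 1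
      ∧ |deriv F t| < 1 := fun t ht => by
    simpa using radial_soliton_ode (EuclideanSpace.basisFun (Fin n) ℝ) hradial hC2 hF hsp
      (by simpa using heq) ht
  have hlt : ∀ t ≥ 0, |deriv F t| < 1 := fun t ht => by
    rcases ht.eq_or_lt with rfl | ht
    · simp [hF'0]
    · exact (hsol t ht).2
  have hpos : ∀ t > 0, 0 < deriv F t := fun t ht =>
    pos_of_radial_soliton_ode (sub_nonneg.mpr (Nat.one_le_cast.mpr (by omega)))
      (hF.continuous_deriv (by norm_num)).continuousOn
      (fun s _ => hF.differentiable_deriv_two s) hlt hF'0 (fun s hs => (hsol s hs).1) ht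
  have hsub : deriv (fun s => f s - f 0) = deriv f := funext fun _ => deriv_sub_const _
  have hderiv : ∀ t > 0, deriv f t = deriv F t ∧ deriv (deriv f) t = deriv (deriv F) t :=
    fun t ht =>
      have hev := hfF.eventuallyEq_of_mem (Ici_mem_nhds ht)
      ⟨hev.deriv_eq, hev.deriv.deriv_eq⟩
  refine ⟨(hF.contDiffOn.congr hfF).sub contDiffOn_const, fun t ht => ?_, sub_self _, ?_,
    fun t ht => ?_, fun x => by simp [hu]⟩
  · rw [hsub, (hderiv t ht).1, (hderiv t ht).2]
    exact (hsol t ht).1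
  · rw [derivWithin_sub_const, derivWithin_congr hfF (hfF self_mem_Ici),
      (hF.differentiable (by norm_num) 0).derivWithin (uniqueDiffOn_Ici 0 0 self_mem_Ici), hF'0]
  · rw [hsub, (hderiv t ht).1]
    exact ⟨hpos t ht, (abs_lt.mp (hlt t ht.le)).2⟩
end

section
/- Let n ≥ 2 be an integer and let r ∈ C^∞([0,∞)) satisfy r''(t)/(1 − r'(t)²) + ((n−1)/t)·r'(t) = 1 for all t ∈ (0,∞), with r(0) = 0, r'(0) = 0, 0 < r'(t) < 1 and 0 < r''(t) ≤ 1 for all t > 0. Then the function u : ℝⁿ → ℝ defined by u(x) = r(|x|) is strictly convex: its Hessian D²u(x) is positive definite at every x ∈ ℝⁿ. -/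
open Set Filter Topology

open Asymptotics

section aux
variable {E : Type*} [NormedAddCommGroup E] [InnerProductSpace ℝ E]

lemma aux_norm_hasFDerivAt {x : E} (hx : x ≠ 0) :
    HasFDerivAt (fun y : E => ‖y‖) (‖x‖⁻¹ • innerSL ℝ x) x := by
  have hρ : (0:ℝ) < ‖x‖ := norm_pos_iff.2 hx
  have h0 : (0:ℝ) < inner ℝ x x := by
    rw [real_inner_self_eq_norm_mul_norm]; positivity
  have hinner : HasFDerivAt (fun y : E => (inner ℝ y y : ℝ)) ((2:ℝ) • innerSL ℝ x) x := by
    have h := (hasFDerivAt_id x).inner ℝ (hasFDerivAt_id x)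
    refine h.congr_fderiv ?_
    ext v
    simp [fderivInnerCLM_apply, real_inner_comm]
    ring
  have h := HasDerivAt.comp_hasFDerivAt_of_eq x (Real.hasDerivAt_sqrt h0.ne') hinner rfl
  have hn : Real.sqrt (inner ℝ x x) = ‖x‖ := (norm_eq_sqrt_real_inner x).symm
  have hfun : (fun y : E => ‖y‖) = (fun s => Real.sqrt s) ∘ (fun y : E => (inner ℝ y y : ℝ)) :=
    funext fun y => norm_eq_sqrt_real_inner y
  have hder : ‖x‖⁻¹ • innerSL ℝ x = (1 / (2 * Real.sqrt (inner ℝ x x))) • (2:ℝ) • innerSL ℝ x := by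
    rw [smul_smul, hn]
    congr 1
    field_simp
  rw [hfun, hder]
  exact h
end aux

section aux2
variable {E : Type*} [NormedAddCommGroup E] [InnerProductSpace ℝ E]

lemma aux_gradient (r r' : ℝ → ℝ)
    (hr' : ∀ t ∈ Set.Ici (0:ℝ), HasDerivWithinAt r (r' t) (Set.Ici 0) t)
    (h0' : r' 0 = 0) (x : E) :
    HasFDerivAt (fun y : E => r ‖y‖) ((r' ‖x‖ / ‖x‖) • innerSL ℝ x) x := by
  rcases eq_or_ne x 0 with rfl | hx
  · have hz : (r' ‖(0:E)‖ / ‖(0:E)‖) • innerSL ℝ (0:E) = 0 := by simp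
    rw [hz]
    refine hasFDerivAt_iff_isLittleO.2 ?_
    have hlo : (fun s : ℝ => r s - r 0) =o[𝓝[Set.Ici 0] 0] (fun s : ℝ => s) := by
      have h1 := hr' 0 Set.self_mem_Ici
      rw [h0'] at h1
      have h2 := hasDerivWithinAt_iff_isLittleO.1 h1
      simpa using h2
    have htend : Filter.Tendsto (fun y : E => ‖y‖) (𝓝 0) (𝓝[Set.Ici 0] 0) := by
      apply tendsto_nhdsWithin_of_tendsto_nhds_of_eventually_within
      · simpa using continuous_norm.tendsto (0:E)
      · exact Filter.Eventually.of_forall fun y => norm_nonneg y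
    have hcomp := hlo.comp_tendsto htend
    have hO : (fun y : E => ‖y‖) =O[𝓝 0] (fun y : E => y) :=
      Asymptotics.isBigO_of_le _ fun y => by simp
    have h3 := hcomp.trans_isBigO hO
    simp only [norm_zero, sub_zero, ContinuousLinearMap.zero_apply]
    exact h3
  · have hρ : (0:ℝ) < ‖x‖ := norm_pos_iff.2 hx
    have hr : HasDerivAt r (r' ‖x‖) ‖x‖ :=
      (hr' _ hρ.le).hasDerivAt (Ici_mem_nhds hρ)
    have h := hr.comp_hasFDerivAt x (aux_norm_hasFDerivAt hx)
    rw [smul_smul, ← div_eq_mul_inv] at h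
    exact h
end aux2

section aux3
variable {E : Type*} [NormedAddCommGroup E] [InnerProductSpace ℝ E]

noncomputable def innerR (E : Type*) [NormedAddCommGroup E] [InnerProductSpace ℝ E] :
    E →L[ℝ] E →L[ℝ] ℝ :=
  LinearMap.mkContinuous₂
    (LinearMap.mk₂ ℝ (fun x y => (inner ℝ x y : ℝ))
      (fun x x' y => inner_add_left x x' y)
      (fun c x y => real_inner_smul_left x y c)
      (fun x y y' => inner_add_right x y y')
      (fun c x y => real_inner_smul_right x y c))
    1 (fun x y => by
      simpa using abs_real_inner_le_norm x y)

@[simp] lemma innerR_apply (x y : E) : innerR E x y = (inner ℝ x y : ℝ) := rfl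

lemma innerR_eq_innerSL (x : E) : innerR E x = innerSL ℝ x :=
  ContinuousLinearMap.ext fun _ => rfl
end aux3

section aux4
variable {E : Type*} [NormedAddCommGroup E] [InnerProductSpace ℝ E]

lemma aux_hessian_ne (r' r'' : ℝ → ℝ)
    (hr'' : ∀ t ∈ Set.Ici (0:ℝ), HasDerivWithinAt r' (r'' t) (Set.Ici 0) t)
    {x : E} (hx : x ≠ 0) :
    HasFDerivAt (fun y : E => (r' ‖y‖ / ‖y‖) • innerR E y)
      (((r'' ‖x‖ * ‖x‖ - r' ‖x‖) / ‖x‖ ^ 3) • ((innerR E x).smulRight (innerR E x))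
        + (r' ‖x‖ / ‖x‖) • innerR E) x := by
  have hρ : (0:ℝ) < ‖x‖ := norm_pos_iff.2 hx
  have hd : HasDerivAt (fun t : ℝ => r' t / t) ((r'' ‖x‖ * ‖x‖ - r' ‖x‖) / ‖x‖ ^ 2) ‖x‖ := by
    have h1 : HasDerivAt r' (r'' ‖x‖) ‖x‖ := (hr'' _ hρ.le).hasDerivAt (Ici_mem_nhds hρ)
    have h2 := h1.div (hasDerivAt_id ‖x‖) hρ.ne'
    refine h2.congr_deriv ?_
    simp [id]
  have hc : HasFDerivAt (fun y : E => r' ‖y‖ / ‖y‖)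
      (((r'' ‖x‖ * ‖x‖ - r' ‖x‖) / ‖x‖ ^ 2) • (‖x‖⁻¹ • innerSL ℝ x)) x :=
    hd.comp_hasFDerivAt x (aux_norm_hasFDerivAt hx)
  have hB : HasFDerivAt (fun y : E => innerR E y) (innerR E) x := (innerR E).hasFDerivAt
  have h := hc.smul hB
  refine h.congr_fderiv ?_
  ext w v
  simp only [ContinuousLinearMap.add_apply, ContinuousLinearMap.smul_apply,
    ContinuousLinearMap.smulRight_apply, ContinuousLinearMap.coe_smul', Pi.smul_apply,
    innerR_apply, innerSL_apply_apply, smul_eq_mul]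
  field_simp
  ring

lemma aux_hessian_zero (r' r'' : ℝ → ℝ)
    (h1 : HasDerivWithinAt r' (r'' 0) (Set.Ici 0) 0) (h0' : r' 0 = 0) :
    HasFDerivAt (fun y : E => (r' ‖y‖ / ‖y‖) • innerR E y) (r'' 0 • innerR E) 0 := by
  refine hasFDerivAt_iff_isLittleO.2 ?_
  have hlo : (fun s : ℝ => r' s - s * r'' 0) =o[𝓝[Set.Ici 0] 0] (fun s : ℝ => s) := by
    have h2 := hasDerivWithinAt_iff_isLittleO.1 h1
    simpa [h0'] using h2
  have htend : Filter.Tendsto (fun y : E => ‖y‖) (𝓝 0) (𝓝[Set.Ici 0] 0) := by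
    apply tendsto_nhdsWithin_of_tendsto_nhds_of_eventually_within
    · simpa using continuous_norm.tendsto (0:E)
    · exact Filter.Eventually.of_forall fun y => norm_nonneg y
  have hkey := (hlo.comp_tendsto htend).trans_isBigO
    (Asymptotics.isBigO_of_le (f := fun y : E => ‖y‖) (g := fun y : E => y) (𝓝 0) (fun y => by simp))
  have hbound : ∀ y : E,
      ‖(r' ‖y‖ / ‖y‖) • innerR E y - r'' 0 • innerR E y‖ ≤ ‖r' ‖y‖ - ‖y‖ * r'' 0‖ := by
    intro y
    rcases eq_or_ne y 0 with rfl | hy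
    · simp [h0']
    · have hρ : (0:ℝ) < ‖y‖ := norm_pos_iff.2 hy
      have : (r' ‖y‖ / ‖y‖) • innerR E y - r'' 0 • innerR E y
          = (r' ‖y‖ / ‖y‖ - r'' 0) • innerR E y := by exact (sub_smul _ _ _).symm
      rw [this, norm_smul (r' ‖y‖ / ‖y‖ - r'' 0) ((innerR E) y), innerR_eq_innerSL, innerSL_apply_norm]
      rw [Real.norm_eq_abs, Real.norm_eq_abs]
      rw [show r' ‖y‖ / ‖y‖ - r'' 0 = (r' ‖y‖ - ‖y‖ * r'' 0) / ‖y‖ by field_simp]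
      rw [abs_div, abs_of_pos hρ, div_mul_cancel₀ _ hρ.ne']
  have hO : (fun y : E => (r' ‖y‖ / ‖y‖) • innerR E y - r'' 0 • innerR E y)
      =O[𝓝 0] (fun y : E => r' ‖y‖ - ‖y‖ * r'' 0) :=
    Asymptotics.isBigO_of_le _ hbound
  have hfin := hO.trans_isLittleO hkey
  refine hfin.congr' ?_ ?_
  · filter_upwards with y
    simp [h0']
  · filter_upwards with y
    simp
end aux4

lemma aux_rpp0 (n : ℕ) (hn : 2 ≤ n) (r r' r'' : ℝ → ℝ)
    (hsmooth : ContDiffOn ℝ (⊤ : ℕ∞) r (Set.Ici 0))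
    (hr' : ∀ t ∈ Set.Ici (0:ℝ), HasDerivWithinAt r (r' t) (Set.Ici 0) t)
    (hr'' : ∀ t ∈ Set.Ici (0:ℝ), HasDerivWithinAt r' (r'' t) (Set.Ici 0) t)
    (heq : ∀ t ∈ Set.Ioi (0:ℝ),
      r'' t / (1 - (r' t) ^ 2) + ((n : ℝ) - 1) / t * r' t = 1)
    (h0' : r' 0 = 0)
    (hlt : ∀ t ∈ Set.Ioi (0:ℝ), 0 < r' t ∧ r' t < 1) :
    0 < r'' 0 := by
  have hud : UniqueDiffOn ℝ (Set.Ici (0:ℝ)) := uniqueDiffOn_Ici 0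
  have hd1 : ∀ t ∈ Set.Ici (0:ℝ), derivWithin r (Set.Ici 0) t = r' t :=
    fun t ht => (hr' t ht).derivWithin (hud t ht)
  have hsm1 : ContDiffOn ℝ (⊤ : ℕ∞) (derivWithin r (Set.Ici 0)) (Set.Ici 0) :=
    hsmooth.derivWithin hud (by simp)
  have hd2 : ∀ t ∈ Set.Ici (0:ℝ),
      derivWithin (derivWithin r (Set.Ici 0)) (Set.Ici 0) t = r'' t := by
    intro t ht
    exact ((hr'' t ht).congr (fun s hs => hd1 s hs) (hd1 t ht)).derivWithin (hud t ht)
  have hcont2 : ContinuousOn (derivWithin (derivWithin r (Set.Ici 0)) (Set.Ici 0)) (Set.Ici 0) :=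
    (hsm1.derivWithin (m := 1) hud (by exact WithTop.coe_le_coe.2 (le_top : ((1 + 1 : ℕ) : ℕ∞) ≤ ⊤))).continuousOn
  have hcont : ContinuousWithinAt r'' (Set.Ici 0) 0 :=
    (hcont2 0 Set.self_mem_Ici).congr (fun t ht => (hd2 t ht).symm) (hd2 0 Set.self_mem_Ici).symm
  have htend_r'' : Filter.Tendsto r'' (𝓝[>] (0:ℝ)) (𝓝 (r'' 0)) :=
    hcont.tendsto.mono_left (nhdsWithin_mono 0 Set.Ioi_subset_Ici_self)
  have hslope : Filter.Tendsto (fun t => r' t / t) (𝓝[>] (0:ℝ)) (𝓝 (r'' 0)) := by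
    have h1 := hr'' 0 Set.self_mem_Ici
    rw [hasDerivWithinAt_iff_tendsto_slope] at h1
    have hset : Set.Ici (0:ℝ) \ {0} = Set.Ioi 0 := by
      ext t
      simp only [Set.mem_diff, Set.mem_Ici, Set.mem_singleton_iff, Set.mem_Ioi]
      constructor
      · rintro ⟨h1, h2⟩; exact lt_of_le_of_ne h1 (Ne.symm h2)
      · intro h; exact ⟨h.le, h.ne'⟩
    rw [hset] at h1
    exact h1.congr (fun t => by simp [slope_def_field, h0'])
  have hr'0 : Filter.Tendsto r' (𝓝[>] (0:ℝ)) (𝓝 0) := by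
    have hid : Filter.Tendsto (fun t : ℝ => t) (𝓝[>] (0:ℝ)) (𝓝 0) :=
      Filter.tendsto_id.mono_left nhdsWithin_le_nhds
    have h1 := hslope.mul hid
    rw [mul_zero] at h1
    refine h1.congr' ?_
    filter_upwards [self_mem_nhdsWithin] with t ht
    exact div_mul_cancel₀ _ (ne_of_gt ht)
  have hmain : Filter.Tendsto (fun t => (1 - ((n:ℝ) - 1) * (r' t / t)) * (1 - r' t ^ 2))
      (𝓝[>] (0:ℝ)) (𝓝 ((1 - ((n:ℝ) - 1) * r'' 0) * 1)) := by
    apply Filter.Tendsto.mul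
    · exact tendsto_const_nhds.sub (tendsto_const_nhds.mul hslope)
    · have h2 := (tendsto_const_nhds (x := (1:ℝ))).sub (hr'0.pow 2)
      simpa using h2
  have htendeq : Filter.Tendsto r'' (𝓝[>] (0:ℝ)) (𝓝 ((1 - ((n:ℝ) - 1) * r'' 0) * 1)) := by
    refine hmain.congr' ?_
    filter_upwards [self_mem_nhdsWithin] with t ht
    have ht0 : (0:ℝ) < t := ht
    obtain ⟨ha, hb⟩ := hlt t ht
    have hne : 1 - r' t ^ 2 ≠ 0 := by nlinarith
    have h1 := heq t ht
    have h2 : r'' t / (1 - r' t ^ 2) = 1 - ((n:ℝ) - 1) / t * r' t := by linarith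
    have h3 : r'' t = (1 - ((n:ℝ) - 1) / t * r' t) * (1 - r' t ^ 2) := by
      rw [← h2, div_mul_cancel₀ _ hne]
    rw [h3]
    congr 1
    ring
  have huniq : (1 - ((n:ℝ) - 1) * r'' 0) * 1 = r'' 0 := tendsto_nhds_unique htendeq htend_r''
  have hn' : (2:ℝ) ≤ (n:ℝ) := by exact_mod_cast hn
  nlinarith [huniq, hn']


theorem stmt_9 (n : ℕ) (hn : 2 ≤ n) (r r' r'' : ℝ → ℝ)
    (hsmooth : ContDiffOn ℝ (⊤ : ℕ∞) r (Set.Ici 0))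
    (hr' : ∀ t ∈ Set.Ici (0:ℝ), HasDerivWithinAt r (r' t) (Set.Ici 0) t)
    (hr'' : ∀ t ∈ Set.Ici (0:ℝ), HasDerivWithinAt r' (r'' t) (Set.Ici 0) t)
    (heq : ∀ t ∈ Set.Ioi (0:ℝ),
      r'' t / (1 - (r' t) ^ 2) + ((n : ℝ) - 1) / t * r' t = 1)
    (h0 : r 0 = 0) (h0' : r' 0 = 0)
    (hlt : ∀ t ∈ Set.Ioi (0:ℝ), 0 < r' t ∧ r' t < 1)
    (hconv : ∀ t ∈ Set.Ioi (0:ℝ), 0 < r'' t ∧ r'' t ≤ 1)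
    (u : EuclideanSpace ℝ (Fin n) → ℝ)
    (hu : ∀ x, u x = r ‖x‖) :
    ∀ x : EuclideanSpace ℝ (Fin n), ∀ v : EuclideanSpace ℝ (Fin n), v ≠ 0 →
      0 < iteratedFDeriv ℝ 2 u x ![v, v] := by
  intro x v hv
  have hufun : u = fun y => r ‖y‖ := funext hu
  rw [hufun, iteratedFDeriv_two_apply]
  simp only [Matrix.cons_val_zero, Matrix.cons_val_one, Matrix.head_cons]
  have hgrad : ∀ y : EuclideanSpace ℝ (Fin n),
      HasFDerivAt (fun z : EuclideanSpace ℝ (Fin n) => r ‖z‖)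
        ((r' ‖y‖ / ‖y‖) • innerR (EuclideanSpace ℝ (Fin n)) y) y := by
    intro y
    rw [innerR_eq_innerSL]
    exact aux_gradient r r' hr' h0' y
  have hfd : (fderiv ℝ (fun z : EuclideanSpace ℝ (Fin n) => r ‖z‖))
      = fun y => (r' ‖y‖ / ‖y‖) • innerR (EuclideanSpace ℝ (Fin n)) y :=
    funext fun y => (hgrad y).fderiv
  rw [hfd]
  have hv2 : (0:ℝ) < ‖v‖ ^ 2 := by
    have : (0:ℝ) < ‖v‖ := norm_pos_iff.2 hv
    positivity
  rcases eq_or_ne x 0 with rfl | hx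
  · have hH := aux_hessian_zero (E := EuclideanSpace ℝ (Fin n)) r' r''
      (hr'' 0 Set.self_mem_Ici) h0'
    rw [hH.fderiv]
    have hpos := aux_rpp0 n hn r r' r'' hsmooth hr' hr'' heq h0' hlt
    simp only [ContinuousLinearMap.smul_apply, ContinuousLinearMap.coe_smul', Pi.smul_apply,
      innerR_apply, smul_eq_mul]
    rw [real_inner_self_eq_norm_sq]
    exact mul_pos hpos hv2
  · have hρ : (0:ℝ) < ‖x‖ := norm_pos_iff.2 hx
    have hH := aux_hessian_ne r' r'' hr'' hx
    rw [hH.fderiv]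
    obtain ⟨hr'pos, hr'lt⟩ := hlt ‖x‖ hρ
    obtain ⟨hr''pos, _⟩ := hconv ‖x‖ hρ
    simp only [ContinuousLinearMap.add_apply, ContinuousLinearMap.smul_apply,
      ContinuousLinearMap.smulRight_apply, ContinuousLinearMap.coe_smul', Pi.smul_apply,
      innerR_apply, smul_eq_mul]
    set ρ := ‖x‖ with hρdef
    set s : ℝ := inner ℝ x v with hsdef
    rw [real_inner_self_eq_norm_sq]
    have hCS : s ^ 2 ≤ ρ ^ 2 * ‖v‖ ^ 2 := by
      have h1 := abs_real_inner_le_norm x v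
      have h2 := abs_nonneg (inner ℝ x v : ℝ)
      nlinarith [sq_abs (inner ℝ x v : ℝ)]
    have hP : 0 < r'' ρ * ρ * s ^ 2 + r' ρ * (ρ ^ 2 * ‖v‖ ^ 2 - s ^ 2) := by
      rcases eq_or_ne s 0 with hs | hs
      · rw [hs]
        ring_nf
        nlinarith [mul_pos (mul_pos (pow_pos hρ 2) hr'pos) hv2]
      · have hs2 : 0 < s ^ 2 := by positivity
        nlinarith [mul_pos (mul_pos hr''pos hρ) hs2,
          mul_nonneg hr'pos.le (sub_nonneg.2 hCS)]
    have hgoal_eq : (r'' ρ * ρ - r' ρ) / ρ ^ 3 * (s * s) + r' ρ / ρ * ‖v‖ ^ 2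
        = (r'' ρ * ρ * s ^ 2 + r' ρ * (ρ ^ 2 * ‖v‖ ^ 2 - s ^ 2)) / ρ ^ 3 := by
      field_simp
      ring
    rw [hgoal_eq]
    positivity
end

section
/- Let n ≥ 2 be an integer and let u : ℝⁿ → ℝ be a convex C² function with |∇u(x)| < 1 for all x ∈ ℝⁿ satisfying the translating soliton equation Δu(x) + D²u(x)(∇u(x), ∇u(x))/(1 − |∇u(x)|²) = 1 for all x ∈ ℝⁿ. Then the blowdown V_u(x) = lim_{ρ→∞} u(ρx)/ρ satisfies the null condition: for every x ∈ ℝⁿ and every δ > 0 there exists y ∈ ℝⁿ such that |V_u(x) − V_u(y)| = |x − y| = δ. -/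
/-!
Let `K` be the compact set of vectors `ξ` with `⟪ξ, ·⟫ ≤ V`; by convexity it contains every
gradient of `u`, and since `V` is 1-Lipschitz with `V 0 = 0` it lies in the closed unit ball.
The null condition at `x` follows once some unit `ξ ∈ K` has `⟪ξ, x⟫ = V x`, for then
`V (x + δ • ξ) = V x + δ`. If there were no such `ξ`, compactness would give `κ > 0` with
`‖ξ‖ + ⟪ξ, x⟫ + κ ≤ 1 + V x` on `K`. Far out along `x` every gradient `∇u q` has
`⟪∇u q, x⟫ ≥ V x - κ / 2`, hence `‖∇u q‖ ≤ 1 - κ / 2`, on balls of any fixed radius. There the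
equation, together with `D²u (∇u, ∇u) ≤ ‖∇u‖² Δu`, gives `Δu ≥ κ / 2`, while the maximum
principle for `u - c ‖· - p‖²` and the Lipschitz bound on `u` allow such balls only of radius
`O(dim / κ)`.
-/

open Set Filter Topology Metric InnerProductSpace Laplacian
open scoped RealInnerProductSpace Gradient

theorem IsLocalMax.nonpos_of_hasDerivAt_of_hasDerivAt {g g' : ℝ → ℝ} {x a : ℝ}
    (hmax : IsLocalMax g x) (hg : ∀ t, HasDerivAt g (g' t) t) (hg' : HasDerivAt g' a x) :
    a ≤ 0 := by
  have hderiv : deriv g = g' := funext fun t => (hg t).deriv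
  by_contra! ha
  have hmin : IsLocalMin g x :=
    isLocalMin_of_deriv_deriv_pos (by rwa [hderiv, hg'.deriv]) hmax.deriv_eq_zero
      (hg x).continuousAt
  have hconst : g =ᶠ[𝓝 x] fun _ => g x :=
    (hmin.and hmax).mono fun t ht => le_antisymm ht.2 ht.1
  have hzero : g' =ᶠ[𝓝 x] fun _ => 0 := by
    simpa [hderiv] using hconst.deriv
  have := hzero.deriv_eq
  rw [hg'.deriv, deriv_const] at this
  exact ha.ne' this

theorem ConvexOn.nonneg_of_hasDerivAt_of_hasDerivAt {g g' : ℝ → ℝ} {x a : ℝ}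
    (hconv : ConvexOn ℝ univ g) (hg : ∀ t, HasDerivAt g (g' t) t) (hg' : HasDerivAt g' a x) :
    0 ≤ a := by
  have hmono : Monotone g' := by
    have := hconv.monotoneOn_deriv fun t _ => (hg t).differentiableAt
    rwa [funext fun t => (hg t).deriv, monotoneOn_univ] at this
  simpa [hg'.deriv] using hmono.deriv_nonneg (x := x)

section
variable {E : Type*} [NormedAddCommGroup E] [NormedSpace ℝ E] {u : E → ℝ} {q v : E}

theorem hasDerivAt_comp_line {G : Type*} [NormedAddCommGroup G] [NormedSpace ℝ G] {f : E → G}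
    {t : ℝ} (hf : DifferentiableAt ℝ f (q + t • v)) :
    HasDerivAt (fun s : ℝ => f (q + s • v)) (fderiv ℝ f (q + t • v) v) t := by
  have hline : HasDerivAt (fun s : ℝ => q + s • v) v t := by
    simpa using ((hasDerivAt_id t).smul_const v).const_add q
  exact hf.hasFDerivAt.comp_hasDerivAt t hline

theorem hasDerivAt_fderiv_comp_line (hu : ContDiff ℝ 2 u) (t : ℝ) :
    HasDerivAt (fun s : ℝ => fderiv ℝ u (q + s • v) v)
      (fderiv ℝ (fderiv ℝ u) (q + t • v) v v) t := by
  have hdiff : Differentiable ℝ (fderiv ℝ u) :=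
    (hu.fderiv_right (m := 1) (by norm_num)).differentiable (by norm_num)
  simpa using (hasDerivAt_comp_line (hdiff _)).clm_apply (hasDerivAt_const t v)

theorem ConvexOn.comp_line (hconv : ConvexOn ℝ univ u) (q v : E) :
    ConvexOn ℝ univ (fun s : ℝ => u (q + s • v)) := by
  simpa [Function.comp_def, AffineMap.lineMap_apply, add_comm] using
    hconv.comp_affineMap (AffineMap.lineMap q (q + v))

theorem ConvexOn.fderiv_fderiv_apply_self_nonneg (hconv : ConvexOn ℝ univ u)
    (hu : ContDiff ℝ 2 u) (q v : E) : 0 ≤ fderiv ℝ (fderiv ℝ u) q v v := by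
  have hd : Differentiable ℝ u := hu.differentiable (by norm_num)
  simpa using (hconv.comp_line q v).nonneg_of_hasDerivAt_of_hasDerivAt
    (fun t => hasDerivAt_comp_line (hd _)) (hasDerivAt_fderiv_comp_line hu 0)

end

section
variable {F : Type*} [NormedAddCommGroup F] [InnerProductSpace ℝ F] [CompleteSpace F] {u : F → ℝ}

theorem ConvexOn.add_inner_gradient_le (hconv : ConvexOn ℝ univ u) {p : F}
    (hu : DifferentiableAt ℝ u p) (z : F) : u p + ⟪∇ u p, z - p⟫ ≤ u z := by
  have h := (hconv.comp_line p (z - p)).le_slope_of_hasDerivAt (mem_univ 0) (mem_univ 1)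
    zero_lt_one (hasDerivAt_comp_line (by simpa using hu))
  simp only [zero_smul, add_zero, slope_def_field, one_smul, add_sub_cancel, sub_zero,
    div_one] at h
  rw [inner_gradient_left]
  linarith

theorem sub_le_norm_sub_of_norm_gradient_le_one (hu : Differentiable ℝ u)
    (hgrad : ∀ x, ‖∇ u x‖ ≤ 1) (a b : F) : u a - u b ≤ ‖a - b‖ := by
  have hfderiv : ∀ x ∈ univ, ‖fderiv ℝ u x‖ ≤ 1 := fun x _ =>
    ((toDual ℝ F).symm.norm_map _).symm.trans_le (hgrad x)
  have h := convex_univ.norm_image_sub_le_of_norm_fderiv_le (fun x _ => hu x) hfderiv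
    (mem_univ b) (mem_univ a)
  rw [one_mul] at h
  exact (le_abs_self _).trans h

end

section
variable {F : Type*} [NormedAddCommGroup F] [InnerProductSpace ℝ F] {ι : Type*} [Fintype ι]

theorem OrthonormalBasis.apply_self_le_norm_sq_mul_sum (b : OrthonormalBasis ι ℝ F)
    (L : F →L[ℝ] F →L[ℝ] ℝ) (hL : ∀ w, 0 ≤ L w w) (v : F) :
    L v v ≤ ‖v‖ ^ 2 * ∑ i, L (b i) (b i) := by
  set a : ι → ℝ := fun i => b.repr v i
  have hexpand : L v v = ∑ i, ∑ j, a i * a j * L (b i) (b j) := by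
    conv_lhs => rw [← b.sum_repr v]
    simp only [map_sum, map_smul, sum_apply, smul_apply, smul_eq_mul, Finset.mul_sum]
    rw [Finset.sum_comm]
    refine Finset.sum_congr rfl fun i _ => Finset.sum_congr rfl fun j _ => ?_
    simp only [a]; ring
  have hnorm : ‖v‖ ^ 2 = ∑ i, a i ^ 2 := by
    rw [← b.repr.norm_map v, EuclideanSpace.norm_sq_eq]
    simp [a]
  -- sum `0 ≤ L w w` for `w = a j • b i - a i • b j` over all pairs `(i, j)`
  have hpair : ∀ i j, a i * a j * L (b i) (b j) + a j * a i * L (b j) (b i) ≤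
      a j ^ 2 * L (b i) (b i) + a i ^ 2 * L (b j) (b j) := by
    intro i j
    have h := hL (a j • b i - a i • b j)
    simp only [map_sub, map_smul, sub_apply, smul_apply, smul_eq_mul] at h
    nlinarith [h]
  have hsum := Finset.sum_le_sum fun i (_ : i ∈ Finset.univ) =>
    Finset.sum_le_sum fun j (_ : j ∈ Finset.univ) => hpair i j
  simp only [Finset.sum_add_distrib] at hsum
  rw [Finset.sum_comm (f := fun i j => a j * a i * L (b j) (b i)),
    Finset.sum_comm (f := fun i j => a i ^ 2 * L (b j) (b j))] at hsum
  simp only [← Finset.sum_mul] at hsum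
  rw [hexpand, hnorm, Finset.mul_sum]
  linarith
end

section
variable {F : Type*} [NormedAddCommGroup F] [InnerProductSpace ℝ F] {u : F → ℝ}

theorem IsLocalMax.fderiv_fderiv_apply_self_le (hu : ContDiff ℝ 2 u) {c : ℝ} {p q : F}
    (hmax : IsLocalMax (fun x => u x - c * ‖x - p‖ ^ 2) q) (v : F) :
    fderiv ℝ (fderiv ℝ u) q v v ≤ 2 * c * ‖v‖ ^ 2 := by
  have hd : Differentiable ℝ u := hu.differentiable (by norm_num)
  have hline : ∀ t : ℝ, HasDerivAt (fun s : ℝ => q + s • v - p) v t := fun t => by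
    simpa using (((hasDerivAt_id t).smul_const v).const_add q).sub_const p
  have hg : ∀ t : ℝ, HasDerivAt (fun s : ℝ => u (q + s • v) - c * ‖q + s • v - p‖ ^ 2)
      (fderiv ℝ u (q + t • v) v - c * (2 * ⟪q + t • v - p, v⟫)) t := fun t =>
    (hasDerivAt_comp_line (hd _)).sub ((hline t).norm_sq.const_mul c)
  have hg' : HasDerivAt (fun s : ℝ => fderiv ℝ u (q + s • v) v - c * (2 * ⟪q + s • v - p, v⟫))
      (fderiv ℝ (fderiv ℝ u) q v v - c * (2 * ⟪v, v⟫)) 0 := by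
    have := (hasDerivAt_fderiv_comp_line (q := q) (v := v) hu 0).sub
      ((((hline 0).inner ℝ (hasDerivAt_const 0 v)).const_mul 2).const_mul c)
    simp only [zero_smul, add_zero, inner_zero_right, zero_add] at this
    exact this
  have hmax0 : IsLocalMax (fun s : ℝ => u (q + s • v) - c * ‖q + s • v - p‖ ^ 2) 0 := by
    have hq0 : IsLocalMax (fun x => u x - c * ‖x - p‖ ^ 2) (q + (0 : ℝ) • v) := by simpa using hmax
    exact hq0.comp_continuous (g := fun s : ℝ => q + s • v) (b := 0) (by fun_prop)
  have := hmax0.nonpos_of_hasDerivAt_of_hasDerivAt hg hg'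
  rw [real_inner_self_eq_norm_sq] at this
  linarith

variable [FiniteDimensional ℝ F]

theorem laplacian_eq_sum_fderiv_fderiv {ι : Type*} [Fintype ι] (b : OrthonormalBasis ι ℝ F)
    (x : F) : Δ u x = ∑ i, fderiv ℝ (fderiv ℝ u) x (b i) (b i) := by
  simp [laplacian_eq_iteratedFDeriv_orthonormalBasis u b, iteratedFDeriv_two_apply]

theorem ConvexOn.fderiv_fderiv_apply_self_le_norm_sq_mul_laplacian (hconv : ConvexOn ℝ univ u)
    (hu : ContDiff ℝ 2 u) (x v : F) : fderiv ℝ (fderiv ℝ u) x v v ≤ ‖v‖ ^ 2 * Δ u x := by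
  rw [laplacian_eq_sum_fderiv_fderiv (stdOrthonormalBasis ℝ F)]
  exact (stdOrthonormalBasis ℝ F).apply_self_le_norm_sq_mul_sum _
    (hconv.fderiv_fderiv_apply_self_nonneg hu x) v

theorem ConvexOn.one_sub_norm_gradient_sq_le_laplacian (hconv : ConvexOn ℝ univ u)
    (hu : ContDiff ℝ 2 u) {x : F} (hx : ‖∇ u x‖ < 1)
    (heq : Δ u x + iteratedFDeriv ℝ 2 u x ![∇ u x, ∇ u x] / (1 - ‖∇ u x‖ ^ 2) = 1) :
    1 - ‖∇ u x‖ ^ 2 ≤ Δ u x := by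
  have hpos : 0 < 1 - ‖∇ u x‖ ^ 2 := by nlinarith [norm_nonneg (∇ u x)]
  have hQ := hconv.fderiv_fderiv_apply_self_le_norm_sq_mul_laplacian hu x (∇ u x)
  simp only [iteratedFDeriv_two_apply, Matrix.cons_val_zero, Matrix.cons_val_one] at heq
  field_simp at heq
  nlinarith

theorem mul_le_one_of_lt_laplacian_on_closedBall (hu : ContDiff ℝ 2 u)
    (hgrad : ∀ x, ‖∇ u x‖ ≤ 1) {c R : ℝ} (hc : 0 < c) {p : F} (hΔ : ∀ q ∈ closedBall p R, 2 * c * Module.finrank ℝ F < Δ u q) :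
    c * R ≤ 1 := by
  by_contra! hcR
  have hR : 0 ≤ R := by by_contra! h; nlinarith
  set v : F → ℝ := fun x => u x - c * ‖x - p‖ ^ 2
  obtain ⟨q, hq, hqmax⟩ := (isCompact_closedBall p R).exists_isMaxOn
    (nonempty_closedBall.mpr hR) (by fun_prop : Continuous v).continuousOn
  -- comparing with the centre: `c ‖q - p‖² ≤ u q - u p ≤ ‖q - p‖`, so `‖q - p‖ ≤ 1 / c < R`
  have hqball : q ∈ ball p R := by
    have hvp : v p ≤ v q := hqmax (mem_closedBall_self hR)
    have hlip := sub_le_norm_sub_of_norm_gradient_le_one (hu.differentiable (by norm_num)) hgrad q p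
    rw [mem_closedBall, dist_eq_norm] at hq
    rw [mem_ball, dist_eq_norm]
    simp only [v, sub_self, norm_zero] at hvp
    by_contra! hRq
    nlinarith [mul_le_mul_of_nonneg_left hRq hc.le]
  have hlocal : IsLocalMax v q := hqmax.isLocalMax (closedBall_mem_nhds_of_mem hqball)
  have hle : Δ u q ≤ 2 * c * Module.finrank ℝ F := by
    rw [laplacian_eq_sum_fderiv_fderiv (stdOrthonormalBasis ℝ F)]
    calc ∑ i, fderiv ℝ (fderiv ℝ u) q (stdOrthonormalBasis ℝ F i) (stdOrthonormalBasis ℝ F i)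
        ≤ ∑ _i : Fin (Module.finrank ℝ F), 2 * c := Finset.sum_le_sum fun i _ => by
          simpa using hlocal.fderiv_fderiv_apply_self_le hu (stdOrthonormalBasis ℝ F i)
      _ = 2 * c * Module.finrank ℝ F := by simp [mul_comm]
  exact (hΔ q (ball_subset_closedBall hqball)).not_ge hle
end

theorem IsCompact.exists_pos_forall_add_le {X : Type*} [TopologicalSpace X] {K : Set X}
    (hK : IsCompact K) {f : X → ℝ} (hf : ContinuousOn f K) {M : ℝ} (h : ∀ x ∈ K, f x < M) :
    ∃ κ > 0, ∀ x ∈ K, f x + κ ≤ M := by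
  rcases K.eq_empty_or_nonempty with rfl | hne
  · exact ⟨1, one_pos, by simp⟩
  obtain ⟨x₀, hx₀, hmax⟩ := hK.exists_isMaxOn hne hf
  exact ⟨M - f x₀, sub_pos.mpr (h x₀ hx₀), fun x hx => by linarith [isMaxOn_iff.mp hmax x hx]⟩

section
variable {F : Type*} [NormedAddCommGroup F] [InnerProductSpace ℝ F]

def IsBlowdown (u V : F → ℝ) : Prop :=
  ∀ x, Tendsto (fun ρ : ℝ => u (ρ • x) / ρ) atTop (𝓝 (V x))

def linearMinorants (V : F → ℝ) : Set F :=
  {ξ | ∀ y, ⟪ξ, y⟫ ≤ V y}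

variable {u V : F → ℝ}

theorem isClosed_linearMinorants (V : F → ℝ) : IsClosed (linearMinorants V) := by
  simp only [linearMinorants, ofPred_forall]
  exact isClosed_iInter fun y => isClosed_le (by fun_prop) continuous_const

theorem norm_le_one_of_mem_linearMinorants (hV : ∀ y, V y ≤ ‖y‖) {ξ : F}
    (hξ : ξ ∈ linearMinorants V) : ‖ξ‖ ≤ 1 := by
  have h := (hξ ξ).trans (hV ξ)
  rw [real_inner_self_eq_norm_sq] at h
  nlinarith [norm_nonneg ξ]

theorem isCompact_linearMinorants [ProperSpace F] (hV : ∀ y, V y ≤ ‖y‖) :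
    IsCompact (linearMinorants V) :=
  (isCompact_closedBall 0 1).of_isClosed_subset (isClosed_linearMinorants V) fun _ hξ =>
    mem_closedBall_zero_iff.mpr (norm_le_one_of_mem_linearMinorants hV hξ)

theorem apply_add_smul_eq_of_mem_linearMinorants (hV : ∀ a b, V a - V b ≤ ‖a - b‖) {ξ x : F}
    (hξ : ξ ∈ linearMinorants V) (hξ1 : ‖ξ‖ = 1) (hξx : ⟪ξ, x⟫ = V x) {δ : ℝ} (hδ : 0 ≤ δ) :
    V (x + δ • ξ) = V x + δ := by
  have hle := hV (x + δ • ξ) x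
  have hge := hξ (x + δ • ξ)
  rw [add_sub_cancel_left, norm_smul, hξ1, Real.norm_of_nonneg hδ, mul_one] at hle
  rw [inner_add_right, real_inner_smul_right, real_inner_self_eq_norm_sq, hξ1, hξx] at hge
  linarith

namespace IsBlowdown

theorem apply_zero (hV : IsBlowdown u V) : V 0 = 0 :=
  tendsto_nhds_unique (hV 0) (by simpa using tendsto_const_nhds.div_atTop tendsto_id)

theorem sub_le_norm_sub (hV : IsBlowdown u V) (hu : ∀ a b, u a - u b ≤ ‖a - b‖) (a b : F) :
    V a - V b ≤ ‖a - b‖ := by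
  refine le_of_tendsto_of_tendsto ((hV a).sub (hV b)) tendsto_const_nhds ?_
  filter_upwards [eventually_gt_atTop (0 : ℝ)] with ρ hρ
  have h := hu (ρ • a) (ρ • b)
  rwa [← smul_sub, norm_smul, Real.norm_of_nonneg hρ.le, mul_comm, ← div_le_iff₀ hρ, sub_div] at h

variable [CompleteSpace F]

theorem gradient_mem_linearMinorants (hV : IsBlowdown u V) (hconv : ConvexOn ℝ univ u)
    (hu : Differentiable ℝ u) (p : F) : ∇ u p ∈ linearMinorants V := by
  intro y
  have hlim : Tendsto (fun ρ : ℝ => u (ρ • y) / ρ + (⟪∇ u p, p⟫ - u p) / ρ) atTop (𝓝 (V y)) := by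
    simpa using (hV y).add (tendsto_const_nhds.div_atTop tendsto_id)
  refine ge_of_tendsto hlim ?_
  filter_upwards [eventually_gt_atTop (0 : ℝ)] with ρ hρ
  have h := hconv.add_inner_gradient_le (hu p) (ρ • y)
  rw [inner_sub_right, real_inner_smul_right] at h
  rw [← add_div, le_div_iff₀ hρ]
  linarith

theorem eventually_le_inner_gradient (hV : IsBlowdown u V) (hconv : ConvexOn ℝ univ u)
    (hu : Differentiable ℝ u) (hgrad : ∀ x, ‖∇ u x‖ ≤ 1) (x : F) {η : ℝ} (hη : 0 < η) (R : ℝ) :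
    ∀ᶠ t : ℝ in atTop, ∀ q ∈ closedBall (t • x) R, V x - η ≤ ⟪∇ u q, x⟫ := by
  have hkey : ∀ t : ℝ, ∀ q ∈ closedBall (t • x) R, u (t • x) - u 0 - 2 * R ≤ t * ⟪∇ u q, x⟫ := by
    intro t q hq
    rw [mem_closedBall, dist_eq_norm] at hq
    have hsub := hconv.add_inner_gradient_le (hu q) 0
    have hlip := sub_le_norm_sub_of_norm_gradient_le_one hu hgrad (t • x) q
    have hcs : ⟪∇ u q, q - t • x⟫ ≤ R := (real_inner_le_norm _ _).trans <| by
      nlinarith [hgrad q, norm_nonneg (∇ u q), norm_nonneg (q - t • x)]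
    rw [inner_sub_right, real_inner_smul_right] at hcs
    rw [zero_sub, inner_neg_right] at hsub
    rw [norm_sub_rev] at hlip
    linarith
  have hlim : Tendsto (fun t : ℝ => u (t • x) / t - (u 0 + 2 * R) / t) atTop (𝓝 (V x)) := by
    simpa using (hV x).sub (tendsto_const_nhds.div_atTop tendsto_id)
  filter_upwards [hlim.eventually (lt_mem_nhds (sub_lt_self _ hη)), eventually_gt_atTop (0 : ℝ)]
    with t hlt ht q hq
  rw [← sub_div, lt_div_iff₀ ht] at hlt
  nlinarith [hkey t q hq]

end IsBlowdown
end

section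
variable {F : Type*} [NormedAddCommGroup F] [InnerProductSpace ℝ F] [FiniteDimensional ℝ F]
  {u V : F → ℝ}

theorem IsBlowdown.exists_unit_mem_linearMinorants_inner_eq (hV : IsBlowdown u V)
    (hconv : ConvexOn ℝ univ u) (hu : ContDiff ℝ 2 u) (hsp : ∀ x, ‖∇ u x‖ < 1)
    (heq : ∀ x, Δ u x + iteratedFDeriv ℝ 2 u x ![∇ u x, ∇ u x] / (1 - ‖∇ u x‖ ^ 2) = 1)
    (x : F) : ∃ ξ ∈ linearMinorants V, ‖ξ‖ = 1 ∧ ⟪ξ, x⟫ = V x := by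
  have hd : Differentiable ℝ u := hu.differentiable (by norm_num)
  have hgrad : ∀ x, ‖∇ u x‖ ≤ 1 := fun x => (hsp x).le
  have hVnorm : ∀ y, V y ≤ ‖y‖ := fun y => by
    simpa [hV.apply_zero] using
      hV.sub_le_norm_sub (sub_le_norm_sub_of_norm_gradient_le_one hd hgrad) y 0
  by_contra! hnone
  obtain ⟨κ, hκ, hgap⟩ := (isCompact_linearMinorants hVnorm).exists_pos_forall_add_le
    (f := fun ξ => ‖ξ‖ + ⟪ξ, x⟫) (M := 1 + V x) (by fun_prop) fun ξ hξ => by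
      have h1 := norm_le_one_of_mem_linearMinorants hVnorm hξ
      have h2 := hξ x
      by_contra! h
      exact hnone ξ hξ (by linarith) (by linarith)
  set c : ℝ := κ / (4 * (Module.finrank ℝ F + 1))
  have hc : 0 < c := by positivity
  have hcκ : 2 * c * Module.finrank ℝ F < κ / 2 := by
    simp only [c]
    field_simp
    nlinarith
  obtain ⟨t, ht⟩ := (hV.eventually_le_inner_gradient hconv hd hgrad x (half_pos hκ) (2 / c)).exists
  have hcR := mul_le_one_of_lt_laplacian_on_closedBall hu hgrad hc (p := t • x) fun q hq => by
    have hnorm : ‖∇ u q‖ ≤ 1 - κ / 2 := by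
      linarith [hgap _ (hV.gradient_mem_linearMinorants hconv hd q), ht q hq]
    have hΔ := hconv.one_sub_norm_gradient_sq_le_laplacian hu (hsp q) (heq q)
    nlinarith [norm_nonneg (∇ u q), hgrad q]
  rw [mul_div_cancel₀ _ hc.ne'] at hcR
  norm_num at hcR

end

theorem stmt_12_general (n : ℕ) (u : EuclideanSpace ℝ (Fin n) → ℝ)
    (hconv : ConvexOn ℝ Set.univ u)
    (hC2 : ContDiff ℝ 2 u)
    (hsp : ∀ x, ‖gradient u x‖ < 1)
    (heq : ∀ x : EuclideanSpace ℝ (Fin n),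
      (∑ i : Fin n, iteratedFDeriv ℝ 2 u x
          ![EuclideanSpace.single i 1, EuclideanSpace.single i 1]) +
        iteratedFDeriv ℝ 2 u x ![gradient u x, gradient u x] /
          (1 - ‖gradient u x‖ ^ 2) = 1)
    (V : EuclideanSpace ℝ (Fin n) → ℝ)
    (hV : ∀ x, Filter.Tendsto (fun ρ : ℝ => u (ρ • x) / ρ) Filter.atTop (nhds (V x))) :
    ∀ x : EuclideanSpace ℝ (Fin n), ∀ δ : ℝ, 0 < δ →
      ∃ y : EuclideanSpace ℝ (Fin n), |V x - V y| = ‖x - y‖ ∧ ‖x - y‖ = δ := by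
  intro x δ hδ
  have hΔ : ∀ x, Δ u x + iteratedFDeriv ℝ 2 u x ![∇ u x, ∇ u x] / (1 - ‖∇ u x‖ ^ 2) = 1 := by
    simpa [laplacian_eq_iteratedFDeriv_orthonormalBasis u (EuclideanSpace.basisFun (Fin n) ℝ)]
      using heq
  obtain ⟨ξ, hξ, hξ1, hξx⟩ :=
    IsBlowdown.exists_unit_mem_linearMinorants_inner_eq hV hconv hC2 hsp hΔ x
  have hVlip := IsBlowdown.sub_le_norm_sub hV <|
    sub_le_norm_sub_of_norm_gradient_le_one (hC2.differentiable (by norm_num)) fun x => (hsp x).le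
  have hdist : ‖x - (x + δ • ξ)‖ = δ := by simp [norm_smul, hξ1, hδ.le]
  refine ⟨x + δ • ξ, ?_, hdist⟩
  rw [apply_add_smul_eq_of_mem_linearMinorants hVlip hξ hξ1 hξx hδ.le, hdist]
  simp [hδ.le]

theorem stmt_12 (n : ℕ) (hn : 2 ≤ n) (u : EuclideanSpace ℝ (Fin n) → ℝ)
    (hconv : ConvexOn ℝ Set.univ u)
    (hC2 : ContDiff ℝ 2 u)
    (hsp : ∀ x, ‖gradient u x‖ < 1)
    (heq : ∀ x : EuclideanSpace ℝ (Fin n),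
      (∑ i : Fin n, iteratedFDeriv ℝ 2 u x
          ![EuclideanSpace.single i 1, EuclideanSpace.single i 1]) +
        iteratedFDeriv ℝ 2 u x ![gradient u x, gradient u x] /
          (1 - ‖gradient u x‖ ^ 2) = 1)
    (V : EuclideanSpace ℝ (Fin n) → ℝ)
    (hV : ∀ x, Filter.Tendsto (fun ρ : ℝ => u (ρ • x) / ρ) Filter.atTop (nhds (V x))) :
    ∀ x : EuclideanSpace ℝ (Fin n), ∀ δ : ℝ, 0 < δ →
      ∃ y : EuclideanSpace ℝ (Fin n), |V x - V y| = ‖x - y‖ ∧ ‖x - y‖ = δ :=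
  stmt_12_general n u hconv hC2 hsp heq V hV
end

section
/- Let n ≥ 2 be an integer, let u : ℝⁿ → ℝ be a convex differentiable function with |∇u(x)| < 1 for all x ∈ ℝⁿ, and let V_u(x) = lim_{ρ→∞} u(ρx)/ρ be its blowdown. Then the closure of the tangent cone T_{V_u}(ℝⁿ) equals the tangential mapping T_{V_u}(0) at the origin, and both equal the closure of the gradient image ∇u(ℝⁿ) = {∇u(x) : x ∈ ℝⁿ}. -/
/-!
Gradients of `u` lie in `T_V(0)` by the subgradient inequality, every `T_V(x₀)` lies in `T_V(0)`
because `V` is positively homogeneous, and `T_V(0)` is closed. Conversely, suppose `α ∈ T_V(0)` is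
at distance `ε > 0` from `∇u(ℝⁿ)`. The minimizer `y` of `u - ⟪α, ·⟫ + c ‖·‖² / 2` satisfies
`∇u(y) = α - c y`, so `c ‖y‖ ≥ ε`, and `y` lies in the closed convex set
`{z | u z - ⟪α, z⟫ + ε ‖z‖ / 2 ≤ u 0}`. Letting `c → 0` shows that this set is unbounded, so it
contains a ray `ℝ₊ w` with `‖w‖ = 1`, which forces `V(w) ≤ ⟪α, w⟫ - ε / 2`, contradicting `α ∈ T_V(0)`.
-/

open Set Filter Topology
open scoped RealInnerProductSpace

/-- The tangential mapping of a function `V` at a point `x₀`. -/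
def tangentialMapping {n : ℕ} (V : EuclideanSpace ℝ (Fin n) → ℝ)
    (x₀ : EuclideanSpace ℝ (Fin n)) : Set (EuclideanSpace ℝ (Fin n)) :=
  {α | ∀ x, ⟪α, x - x₀⟫ + V x₀ ≤ V x}

lemma tendsto_add_mul_div_atTop (a b : ℝ) :
    Tendsto (fun ρ : ℝ => (a + ρ * b) / ρ) atTop (𝓝 b) := by
  have h : Tendsto (fun ρ : ℝ => a / ρ + b) atTop (𝓝 (0 + b)) :=
    (tendsto_const_nhds.div_atTop tendsto_id).add tendsto_const_nhds
  rw [zero_add] at h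
  refine h.congr' ?_
  filter_upwards [eventually_gt_atTop 0] with ρ hρ
  field_simp

lemma le_of_tendsto_div_of_le_add_mul {f : ℝ → ℝ} {L a b : ℝ}
    (hf : Tendsto (fun ρ => f ρ / ρ) atTop (𝓝 L)) (h : ∀ ρ > 0, f ρ ≤ a + ρ * b) : L ≤ b := by
  refine le_of_tendsto_of_tendsto hf (tendsto_add_mul_div_atTop a b) ?_
  filter_upwards [eventually_gt_atTop 0] with ρ hρ
  exact div_le_div_of_nonneg_right (h ρ hρ) hρ.le

lemma le_of_tendsto_div_of_add_mul_le {f : ℝ → ℝ} {L a b : ℝ}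
    (hf : Tendsto (fun ρ => f ρ / ρ) atTop (𝓝 L)) (h : ∀ ρ > 0, a + ρ * b ≤ f ρ) : b ≤ L := by
  refine le_of_tendsto_of_tendsto (tendsto_add_mul_div_atTop a b) hf ?_
  filter_upwards [eventually_gt_atTop 0] with ρ hρ
  exact div_le_div_of_nonneg_right (h ρ hρ) hρ.le

section Blowdown

variable {E : Type*} [AddCommGroup E] [Module ℝ E] {u V : E → ℝ}

lemma blowdown_smul (hV : ∀ x, Tendsto (fun ρ : ℝ => u (ρ • x) / ρ) atTop (𝓝 (V x)))
    {t : ℝ} (ht : 0 < t) (x : E) : V (t • x) = t * V x := by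
  have h : Tendsto (fun ρ : ℝ => t * (u ((ρ * t) • x) / (ρ * t))) atTop (𝓝 (t * V x)) :=
    ((hV x).comp (tendsto_id.atTop_mul_const ht)).const_mul t
  refine tendsto_nhds_unique (hV (t • x)) (h.congr' ?_)
  filter_upwards [eventually_gt_atTop 0] with ρ hρ
  rw [smul_smul]
  field_simp

lemma map_zero_of_smul_eq_mul (hhom : ∀ t > 0, ∀ x, V (t • x) = t * V x) : V 0 = 0 := by
  have h := hhom 2 two_pos 0
  rw [smul_zero] at h
  linarith

end Blowdown

section Convex

variable {E : Type*} [NormedAddCommGroup E] [NormedSpace ℝ E] [ProperSpace E]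

theorem Convex.exists_ray_subset_of_not_isBounded {s : Set E}
    (hs : Convex ℝ s) (hcl : IsClosed s) (h0 : 0 ∈ s) (hunb : ¬ Bornology.IsBounded s) :
    ∃ w : E, ‖w‖ = 1 ∧ ∀ ρ : ℝ, 0 ≤ ρ → ρ • w ∈ s := by
  have hfar : ∀ k : ℕ, ∃ z ∈ s, (k : ℝ) + 1 ≤ ‖z‖ := by
    intro k
    by_contra! h
    exact hunb (isBounded_iff_forall_norm_le.2 ⟨k + 1, fun z hz => (h z hz).le⟩)
  choose z hzs hz using hfar
  have hz0 : ∀ k, 0 < ‖z k‖ := fun k => by linarith [hz k, (k.cast_nonneg : (0 : ℝ) ≤ k)]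
  obtain ⟨w, hw, φ, hφ, hlim⟩ := (isCompact_sphere (0 : E) 1).tendsto_subseq
    (x := fun k => ‖z k‖⁻¹ • z k) fun k => by
      simp [norm_smul, inv_mul_cancel₀ (hz0 k).ne']
  -- the segment from `0` to `z k` passes through `ρ • (‖z k‖⁻¹ • z k)` once `‖z k‖ ≥ ρ`
  refine ⟨w, by simpa using hw, fun ρ hρ => hcl.mem_of_tendsto (hlim.const_smul ρ) ?_⟩
  filter_upwards [eventually_ge_atTop ⌈ρ⌉₊] with j hj
  have hρz : ρ ≤ ‖z (φ j)‖ := calc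
    ρ ≤ ⌈ρ⌉₊ := Nat.le_ceil ρ
    _ ≤ φ j := by exact_mod_cast hj.trans hφ.le_apply
    _ ≤ ‖z (φ j)‖ := by linarith [hz (φ j)]
  rw [Function.comp_apply, smul_smul]
  exact hs.smul_mem_of_zero_mem h0 (hzs _)
    ⟨by positivity, by rw [mul_inv_le_iff₀ (hz0 _), one_mul]; exact hρz⟩

end Convex

section Gradient

variable {E : Type*} [NormedAddCommGroup E] [InnerProductSpace ℝ E] [CompleteSpace E] {u : E → ℝ}

theorem ConvexOn.add_inner_gradient_le_s13 (hconv : ConvexOn ℝ univ u) {x : E}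
    (hx : DifferentiableAt ℝ u x) (y : E) : u x + ⟪gradient u x, y - x⟫ ≤ u y := by
  let ℓ : ℝ →ᵃ[ℝ] E := AffineMap.lineMap x y
  have hℓ0 : ℓ 0 = x := AffineMap.lineMap_apply_zero x y
  have hℓ1 : ℓ 1 = y := AffineMap.lineMap_apply_one x y
  have hu : HasFDerivAt u (InnerProductSpace.toDual ℝ E (gradient u x)) (ℓ 0) := by
    rw [hℓ0]; exact hx.hasGradientAt.hasFDerivAt
  have hline : HasDerivAt (u ∘ ℓ) ⟪gradient u x, y - x⟫ 0 := by
    simpa only [InnerProductSpace.toDual_apply_apply] using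
      hu.comp_hasDerivAt (0 : ℝ) AffineMap.hasDerivAt_lineMap
  have h := (hconv.comp_affineMap ℓ).le_slope_of_hasDerivAt
    (mem_univ 0) (mem_univ 1) one_pos hline
  simp only [slope_def_field, Function.comp_apply, hℓ0, hℓ1, sub_zero, div_one] at h
  linarith

theorem ConvexOn.exists_gradient_eq_sub_smul [ProperSpace E] (hconv : ConvexOn ℝ univ u)
    (hdiff : Differentiable ℝ u) (α : E) {c : ℝ} (hc : 0 < c) :
    ∃ y, gradient u y = α - c • y ∧ u y - ⟪α, y⟫ + c / 2 * ‖y‖ ^ 2 ≤ u 0 := by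
  set f : E → ℝ := fun z => u z - ⟪α, z⟫ + c / 2 * ‖z‖ ^ 2
  have hcont : Continuous f := by have := hdiff.continuous; fun_prop
  -- `f` grows quadratically, by the subgradient inequality at `0`
  have hcoercive : ∀ᶠ z in cocompact E, f 0 ≤ f z := by
    filter_upwards [tendsto_norm_cocompact_atTop.eventually
      (eventually_ge_atTop (2 / c * ‖gradient u 0 - α‖))] with z hz
    have hsub := hconv.add_inner_gradient_le_s13 (hdiff 0) z
    have hCS := real_inner_le_norm (gradient u 0 - α) (-z)
    rw [sub_zero] at hsub
    rw [inner_neg_right, inner_sub_left, norm_neg] at hCS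
    have hquad : ‖gradient u 0 - α‖ * ‖z‖ ≤ c / 2 * ‖z‖ ^ 2 := by
      rw [div_mul_eq_mul_div, div_le_iff₀ hc] at hz
      nlinarith [norm_nonneg z]
    simp only [f, inner_zero_right, norm_zero]
    nlinarith
  obtain ⟨y, hy⟩ := hcont.exists_forall_le' 0 hcoercive
  have hderiv : HasGradientAt f (gradient u y - α + c • y) y := by
    have h := (((hdiff y).hasGradientAt.hasFDerivAt.sub (innerSL ℝ α).hasFDerivAt).add
      ((hasStrictFDerivAt_norm_sq y).hasFDerivAt.const_mul (c / 2)))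
    refine hasGradientAt_iff_hasFDerivAt.2 (h.congr_fderiv ?_ : HasFDerivAt f _ y)
    ext v
    simp
    ring
  have hzero : gradient u y - α + c • y = 0 :=
    (InnerProductSpace.toDual ℝ E).map_eq_zero_iff.mp
      (IsLocalMin.hasFDerivAt_eq_zero (Filter.Eventually.of_forall hy) hderiv.hasFDerivAt)
  refine ⟨y, by rw [← sub_eq_zero, ← hzero]; abel, ?_⟩
  simpa [f] using hy 0

theorem ConvexOn.inner_gradient_le_blowdown (hconv : ConvexOn ℝ univ u) {z : E}
    (hz : DifferentiableAt ℝ u z) {x : E} {L : ℝ}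
    (hL : Tendsto (fun ρ : ℝ => u (ρ • x) / ρ) atTop (𝓝 L)) : ⟪gradient u z, x⟫ ≤ L := by
  refine le_of_tendsto_div_of_add_mul_le hL (a := u z - ⟪gradient u z, z⟫) fun ρ _ => ?_
  have h := hconv.add_inner_gradient_le_s13 hz (ρ • x)
  rw [inner_sub_right, real_inner_smul_right] at h
  linarith

theorem ConvexOn.mem_closure_range_gradient [ProperSpace E] (hconv : ConvexOn ℝ univ u)
    (hdiff : Differentiable ℝ u) {V : E → ℝ}
    (hV : ∀ x, Tendsto (fun ρ : ℝ => u (ρ • x) / ρ) atTop (𝓝 (V x)))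
    {α : E} (hα : ∀ x, ⟪α, x⟫ ≤ V x) : α ∈ closure (range (gradient u)) := by
  by_contra hnot
  obtain ⟨ε, hε, hfar⟩ : ∃ ε > 0, ∀ y, ε ≤ dist α (gradient u y) := by
    simpa [Metric.mem_closure_iff] using hnot
  set s : Set E := {z | u z - ⟪α, z⟫ + ε / 2 * ‖z‖ ≤ u 0}
  have hs : Convex ℝ s := by
    have hg : ConvexOn ℝ univ (fun z => u z - ⟪α, z⟫ + ε / 2 * ‖z‖) :=
      (hconv.sub ((innerₛₗ ℝ α).concaveOn convex_univ)).add
        ((convexOn_norm convex_univ).smul (by positivity))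
    simpa [s] using hg.convex_le (u 0)
  have hcl : IsClosed s := by
    have := hdiff.continuous
    exact isClosed_le (by fun_prop) continuous_const
  have h0 : (0 : E) ∈ s := by simp [s]
  -- the regularized minimizers `y` with `c = ε / (|R| + 1)` lie in `s` and have `‖y‖ > R`
  have hunb : ¬ Bornology.IsBounded s := by
    intro hb
    obtain ⟨R, hR⟩ := isBounded_iff_forall_norm_le.1 hb
    have hc : 0 < ε / (|R| + 1) := by positivity
    obtain ⟨y, hgy, hmin⟩ := hconv.exists_gradient_eq_sub_smul hdiff α hc
    have hcy : ε ≤ ε / (|R| + 1) * ‖y‖ := by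
      have h := hfar y
      rwa [hgy, dist_eq_norm, sub_sub_cancel, norm_smul, Real.norm_of_nonneg hc.le] at h
    have hy : |R| + 1 ≤ ‖y‖ := by
      rw [div_mul_eq_mul_div, le_div_iff₀ (by positivity)] at hcy
      exact le_of_mul_le_mul_left hcy hε
    have hys : y ∈ s := by
      change u y - ⟪α, y⟫ + ε / 2 * ‖y‖ ≤ u 0
      nlinarith [norm_nonneg y]
    linarith [hR y hys, le_abs_self R]
  obtain ⟨w, hw, hray⟩ := hs.exists_ray_subset_of_not_isBounded hcl h0 hunb
  have hVw : V w ≤ ⟪α, w⟫ - ε / 2 := by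
    refine le_of_tendsto_div_of_le_add_mul (hV w) (a := u 0) fun ρ hρ => ?_
    have h : u (ρ • w) - ⟪α, ρ • w⟫ + ε / 2 * ‖ρ • w‖ ≤ u 0 := hray ρ hρ.le
    rw [real_inner_smul_right, norm_smul, hw, Real.norm_of_nonneg hρ.le] at h
    linarith
  linarith [hα w]

end Gradient

section TangentialMapping

variable {n : ℕ} {V : EuclideanSpace ℝ (Fin n) → ℝ}

lemma isClosed_tangentialMapping (V : EuclideanSpace ℝ (Fin n) → ℝ)
    (x₀ : EuclideanSpace ℝ (Fin n)) : IsClosed (tangentialMapping V x₀) := by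
  simp only [tangentialMapping, ofPred_forall]
  exact isClosed_iInter fun x => isClosed_le (by fun_prop) continuous_const

lemma mem_tangentialMapping_zero_iff (hV0 : V 0 = 0) {α : EuclideanSpace ℝ (Fin n)} :
    α ∈ tangentialMapping V 0 ↔ ∀ x, ⟪α, x⟫ ≤ V x := by
  simp [tangentialMapping, hV0]

/-- Testing the supporting hyperplane at `0` and at `2 • x₀` gives Euler's identity
`⟪α, x₀⟫ = V x₀`, which turns the inequality at `x₀` into the one at `0`. -/
lemma tangentialMapping_subset_zero (hhom : ∀ t > 0, ∀ x, V (t • x) = t * V x)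
    (x₀ : EuclideanSpace ℝ (Fin n)) : tangentialMapping V x₀ ⊆ tangentialMapping V 0 := by
  intro α hα
  have hV0 := map_zero_of_smul_eq_mul hhom
  have hle := hα 0
  have hge := hα ((2 : ℝ) • x₀)
  rw [hhom 2 two_pos, two_smul ℝ, add_sub_cancel_right] at hge
  rw [zero_sub, inner_neg_right, hV0] at hle
  refine (mem_tangentialMapping_zero_iff hV0).2 fun x => ?_
  have hx := hα x
  rw [inner_sub_right] at hx
  linarith

end TangentialMapping

theorem stmt_13_general (n : ℕ) (u : EuclideanSpace ℝ (Fin n) → ℝ)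
    (hconv : ConvexOn ℝ Set.univ u)
    (hdiff : Differentiable ℝ u)
    (V : EuclideanSpace ℝ (Fin n) → ℝ)
    (hV : ∀ x, Filter.Tendsto (fun ρ : ℝ => u (ρ • x) / ρ) Filter.atTop (nhds (V x))) :
    closure (⋃ x : EuclideanSpace ℝ (Fin n), tangentialMapping V x)
        = tangentialMapping V 0 ∧
      tangentialMapping V 0 = closure (Set.range (gradient u)) := by
  have hhom : ∀ t > 0, ∀ x, V (t • x) = t * V x := fun t ht x => blowdown_smul hV ht x
  have hT0 := fun α => mem_tangentialMapping_zero_iff (α := α) (map_zero_of_smul_eq_mul hhom)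
  have hclosed := isClosed_tangentialMapping V 0
  constructor
  · exact subset_antisymm (closure_minimal (iUnion_subset (tangentialMapping_subset_zero hhom))
      hclosed) ((subset_iUnion _ 0).trans subset_closure)
  · refine subset_antisymm (fun α hα => hconv.mem_closure_range_gradient hdiff hV ((hT0 α).1 hα))
      (closure_minimal ?_ hclosed)
    rintro _ ⟨z, rfl⟩
    exact (hT0 _).2 fun x => hconv.inner_gradient_le_blowdown (hdiff z) (hV x)

theorem stmt_13 (n : ℕ) (hn : 2 ≤ n) (u : EuclideanSpace ℝ (Fin n) → ℝ)
    (hconv : ConvexOn ℝ Set.univ u)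
    (hdiff : Differentiable ℝ u)
    (hsp : ∀ x, ‖gradient u x‖ < 1)
    (V : EuclideanSpace ℝ (Fin n) → ℝ)
    (hV : ∀ x, Filter.Tendsto (fun ρ : ℝ => u (ρ • x) / ρ) Filter.atTop (nhds (V x))) :
    closure (⋃ x : EuclideanSpace ℝ (Fin n), tangentialMapping V x)
        = tangentialMapping V 0 ∧
      tangentialMapping V 0 = closure (Set.range (gradient u)) :=
  stmt_13_general n u hconv hdiff V hV
end
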